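/- arXiv:2305.18130 — 4 statements merged into one kernel-verified Lean document; each statement's English description precedes it below -/
import Mathlib

section
/- Let k ≥ 2 and s ≥ 3 be integers, let h = ⌊(s-1)/2⌋, α = 1/(36(h+1)³), and n ≥ 28(h+1)²/α². If G is a graph of order n in Ex_sp(n, {K_{k+1}, L_s}), then G is connected. -/
open SimpleGraph Matrix

/-- The adjacency matrix of a simple graph, over `ℝ`. -/
noncomputable def adjMat {V : Type*} (G : SimpleGraph V) : Matrix V V ℝ :=
  fun a b => by classical exact if G.Adj a b then 1 else 0

/-- The spectral radius of a graph: the largest (real) eigenvalue of its adjacency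
matrix, expressed as the supremum of the real spectrum. -/
noncomputable def specRad {V : Type*} [Fintype V] [DecidableEq V] (G : SimpleGraph V) : ℝ :=
  sSup (spectrum ℝ (adjMat G))

/-- A linear forest: an acyclic graph in which every vertex has degree at most 2,
i.e. every connected component is a path. -/
def IsLinearForest {V : Type*} (H : SimpleGraph V) : Prop :=
  H.IsAcyclic ∧ ∀ v, {w | H.Adj v w}.ncard ≤ 2

/-- `G` contains some member of `𝓛 s`, the family of linear forests with `s` edges. -/
def ContainsLinForest {V : Type*} (G : SimpleGraph V) (s : ℕ) : Prop :=
  ∃ H : SimpleGraph V, H ≤ G ∧ IsLinearForest H ∧ H.edgeSet.ncard = s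

/-- `G` belongs to `Ex_sp(n, {K_{k+1}, 𝓛_s})`: it is `{K_{k+1}, 𝓛_s}`-free and has the
maximum spectral radius among all such graphs on `n` vertices. -/
def IsExtremal (n k s : ℕ) (G : SimpleGraph (Fin n)) : Prop :=
  G.CliqueFree (k + 1) ∧ ¬ ContainsLinForest G s ∧
    ∀ H : SimpleGraph (Fin n), H.CliqueFree (k + 1) → ¬ ContainsLinForest H s →
      specRad H ≤ specRad G

/-- The degree of `v` in `G`. -/
noncomputable def degOf {V : Type*} (G : SimpleGraph V) (v : V) : ℕ :=
  {w | G.Adj v w}.ncard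

section Aux

lemma adjMat_of_adj {V : Type*} {G : SimpleGraph V} {a b : V} (h : G.Adj a b) :
    adjMat G a b = 1 := by unfold adjMat; exact if_pos h

lemma adjMat_of_not_adj {V : Type*} {G : SimpleGraph V} {a b : V} (h : ¬ G.Adj a b) :
    adjMat G a b = 0 := by unfold adjMat; exact if_neg h

lemma adjMat_isHermitian {n : ℕ} (G : SimpleGraph (Fin n)) : (adjMat G).IsHermitian := by
  unfold Matrix.IsHermitian
  ext i j
  simp only [conjTranspose_apply, star_trivial]
  by_cases h : G.Adj j i
  · rw [adjMat_of_adj h, adjMat_of_adj h.symm]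
  · rw [adjMat_of_not_adj h, adjMat_of_not_adj fun h' => h h'.symm]

lemma spectrum_adjMat_eq {n : ℕ} (G : SimpleGraph (Fin n)) :
    spectrum ℝ (adjMat G) = Set.range (adjMat_isHermitian G).eigenvalues :=
  (adjMat_isHermitian G).spectrum_real_eq_range_eigenvalues

lemma eigenvalues_le_specRad {n : ℕ} (G : SimpleGraph (Fin n)) (i : Fin n) :
    (adjMat_isHermitian G).eigenvalues i ≤ specRad G := by
  apply le_csSup
  · rw [spectrum_adjMat_eq]
    exact (Set.finite_range _).bddAbove
  · rw [spectrum_adjMat_eq]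
    exact Set.mem_range_self i

lemma exists_eigvec_specRad {n : ℕ} (hn : 0 < n) (G : SimpleGraph (Fin n)) :
    ∃ v : Fin n → ℝ, v ≠ 0 ∧ adjMat G *ᵥ v = specRad G • v := by
  have hA := adjMat_isHermitian G
  have hne : (spectrum ℝ (adjMat G)).Nonempty := by
    rw [spectrum_adjMat_eq]
    haveI : Nonempty (Fin n) := ⟨⟨0, hn⟩⟩
    exact Set.range_nonempty _
  have hfin : (spectrum ℝ (adjMat G)).Finite := by
    rw [spectrum_adjMat_eq]; exact Set.finite_range _
  have hmem : specRad G ∈ spectrum ℝ (adjMat G) := hne.csSup_mem hfin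
  rw [spectrum_adjMat_eq] at hmem
  obtain ⟨i, hi⟩ := hmem
  refine ⟨⇑(hA.eigenvectorBasis i), ?_, by rw [hA.mulVec_eigenvectorBasis i, hi]⟩
  intro h0
  exact hA.eigenvectorBasis.orthonormal.ne_zero i (by ext t; exact congrFun h0 t)

lemma rayleigh_le_specRad {n : ℕ} (hn : 0 < n) (G : SimpleGraph (Fin n)) (z : Fin n → ℝ) :
    z ⬝ᵥ (adjMat G *ᵥ z) ≤ specRad G * (z ⬝ᵥ z) := by
  have hA := adjMat_isHermitian G
  set U : Matrix (Fin n) (Fin n) ℝ := (hA.eigenvectorUnitary : Matrix (Fin n) (Fin n) ℝ) with hU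
  have hunit : U ∈ Matrix.unitaryGroup (Fin n) ℝ := hA.eigenvectorUnitary.2
  have hUU : U * star U = 1 := (Matrix.mem_unitaryGroup_iff).mp hunit
  have hspec : adjMat G = U * Matrix.diagonal (RCLike.ofReal ∘ hA.eigenvalues) * star U :=
    hA.spectral_theorem
  have hdiag : Matrix.diagonal (RCLike.ofReal ∘ hA.eigenvalues)
      = Matrix.diagonal hA.eigenvalues := by
    congr 1
  set y : Fin n → ℝ := (star U) *ᵥ z with hy
  have key : z ⬝ᵥ (adjMat G *ᵥ z) = y ⬝ᵥ (Matrix.diagonal hA.eigenvalues *ᵥ y) := by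
    have h0 : z ⬝ᵥ (adjMat G *ᵥ z)
        = z ⬝ᵥ ((U * Matrix.diagonal hA.eigenvalues * star U) *ᵥ z) := by
      conv_lhs => rw [hspec, hdiag]
    rw [h0, ← Matrix.mulVec_mulVec, ← Matrix.mulVec_mulVec, Matrix.dotProduct_mulVec]
    congr 1
    rw [hy, ← Matrix.mulVec_transpose]
    have h3 : Uᵀ = star U := by
      ext i j
      simp [Matrix.conjTranspose_apply]
    rw [h3]
  have hyy : y ⬝ᵥ y = z ⬝ᵥ z := by
    have h1 : y ⬝ᵥ y = (y ᵥ* (star U)) ⬝ᵥ z := by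
      rw [hy, Matrix.dotProduct_mulVec]
    have h2 : y ᵥ* (star U) = (star U)ᵀ *ᵥ y := by rw [Matrix.mulVec_transpose]
    have h3 : (star U)ᵀ = U := by
      ext i j
      simp [Matrix.conjTranspose_apply]
    rw [h1, h2, h3, hy, Matrix.mulVec_mulVec, hUU, Matrix.one_mulVec]
  rw [key, ← hyy]
  have : y ⬝ᵥ (Matrix.diagonal hA.eigenvalues *ᵥ y)
      = ∑ i, hA.eigenvalues i * (y i * y i) := by
    simp only [dotProduct, Matrix.mulVec_diagonal]
    exact Finset.sum_congr rfl fun i _ => by ring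
  rw [this, dotProduct, Finset.mul_sum]
  apply Finset.sum_le_sum
  intro i _
  have h1 : hA.eigenvalues i ≤ specRad G := eigenvalues_le_specRad G i
  have h2 : 0 ≤ y i * y i := mul_self_nonneg _
  exact mul_le_mul_of_nonneg_right h1 h2


lemma support_ncard_le {n : ℕ} (F : SimpleGraph (Fin n)) {s : ℕ}
    (hc : F.edgeSet.ncard = s) : F.support.ncard ≤ 2 * s := by
  classical
  have hfin : F.support.Finite := Set.toFinite _
  rw [Set.ncard_eq_toFinset_card _ hfin]
  have hdeg : ∀ v ∈ hfin.toFinset, 1 ≤ F.degree v := by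
    intro v hv
    rw [Set.Finite.mem_toFinset, SimpleGraph.mem_support] at hv
    obtain ⟨w, hw⟩ := hv
    rw [← SimpleGraph.card_neighborFinset_eq_degree]
    exact Finset.card_pos.mpr ⟨w, by simpa [SimpleGraph.mem_neighborFinset] using hw⟩
  calc hfin.toFinset.card = ∑ _v ∈ hfin.toFinset, 1 := by simp
    _ ≤ ∑ v ∈ hfin.toFinset, F.degree v := Finset.sum_le_sum hdeg
    _ ≤ ∑ v, F.degree v := Finset.sum_le_sum_of_subset (Finset.subset_univ _)
    _ = 2 * F.edgeFinset.card := F.sum_degrees_eq_twice_card_edges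
    _ = 2 * s := by
        rw [SimpleGraph.edgeFinset_card, ← Nat.card_eq_fintype_card,
          Nat.card_coe_set_eq, hc]

-- neighbor set ncard vs filter
lemma neighbors_ncard_eq {n : ℕ} (G : SimpleGraph (Fin n)) (u : Fin n)
    [DecidablePred (G.Adj u)] :
    {t | G.Adj u t}.ncard = (Finset.univ.filter (fun t => G.Adj u t)).card := by
  rw [Set.ncard_eq_toFinset_card _ (Set.toFinite _)]
  congr 1
  ext t
  simp

/-- The surgery graph: delete all edges at `w`, add the single edge `u w`. -/
def Hg {V : Type*} (G : SimpleGraph V) (u w : V) : SimpleGraph V where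
  Adj a b := (G.Adj a b ∧ a ≠ w ∧ b ≠ w) ∨ (u ≠ w ∧ ((a = u ∧ b = w) ∨ (a = w ∧ b = u)))
  symm := ⟨by
    rintro a b (⟨h, ha, hb⟩ | ⟨hne, (⟨rfl, rfl⟩ | ⟨rfl, rfl⟩)⟩)
    · exact Or.inl ⟨h.symm, hb, ha⟩
    · exact Or.inr ⟨hne, Or.inr ⟨rfl, rfl⟩⟩
    · exact Or.inr ⟨hne, Or.inl ⟨rfl, rfl⟩⟩⟩
  loopless := ⟨by
    rintro a (⟨h, _, _⟩ | ⟨hne, (⟨rfl, rfl⟩ | ⟨rfl, rfl⟩)⟩)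
    · exact G.loopless.irrefl a h
    · exact hne rfl
    · exact hne rfl⟩

lemma Hg_adj {V : Type*} {G : SimpleGraph V} {u w a b : V} :
    (Hg G u w).Adj a b ↔
      (G.Adj a b ∧ a ≠ w ∧ b ≠ w) ∨ (u ≠ w ∧ ((a = u ∧ b = w) ∨ (a = w ∧ b = u))) :=
  Iff.rfl

lemma Hg_cliqueFree {V : Type*} [DecidableEq V] {G : SimpleGraph V} {u w : V} {k : ℕ}
    (hk : 2 ≤ k) (hG : G.CliqueFree (k + 1)) : (Hg G u w).CliqueFree (k + 1) := by
  intro t ht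
  by_cases hw : w ∈ t
  · have hcard : 1 < (t.erase w).card := by
      rw [Finset.card_erase_of_mem hw, ht.2]
      omega
    obtain ⟨a, ha, b, hb, hab⟩ := Finset.one_lt_card.mp hcard
    have haw : a ≠ w := Finset.ne_of_mem_erase ha
    have hbw : b ≠ w := Finset.ne_of_mem_erase hb
    have hadj_a : (Hg G u w).Adj a w := ht.1 (Finset.mem_of_mem_erase ha) hw haw
    have hadj_b : (Hg G u w).Adj b w := ht.1 (Finset.mem_of_mem_erase hb) hw hbw
    have hau : a = u := by
      rcases hadj_a with ⟨_, _, hww⟩ | ⟨huw, (⟨h1, _⟩ | ⟨h1, _⟩)⟩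
      · exact absurd rfl hww
      · exact h1
      · exact absurd h1 haw
    have hbu : b = u := by
      rcases hadj_b with ⟨_, _, hww⟩ | ⟨huw, (⟨h1, _⟩ | ⟨h1, _⟩)⟩
      · exact absurd rfl hww
      · exact h1
      · exact absurd h1 hbw
    exact hab (hau.trans hbu.symm)
  · refine hG t ⟨?_, ht.2⟩
    intro a ha b hb hab
    rcases ht.1 ha hb hab with ⟨h, _, _⟩ | ⟨_, (⟨rfl, rfl⟩ | ⟨rfl, rfl⟩)⟩
    · exact h
    · exact absurd hb hw
    · exact absurd ha hw

lemma Hg_forestFree {n : ℕ} {G : SimpleGraph (Fin n)} {u w : Fin n} {s : ℕ}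
    (hGfree : ¬ ContainsLinForest G s)
    (hw : ∀ t, G.Adj u t → t ≠ w)
    (hdeg : 2 * s + 1 ≤ {t | G.Adj u t}.ncard) :
    ¬ ContainsLinForest (Hg G u w) s := by
  rintro ⟨F, hFle, ⟨hFac, hFdeg⟩, hFcard⟩
  by_cases hc : F.Adj u w
  · -- surgery: swap w with a fresh neighbor z of u
    have hS : F.support.ncard ≤ 2 * s := support_ncard_le F hFcard
    have hnsub : ¬ ({t | G.Adj u t} ⊆ F.support) := by
      intro hsub
      have := Set.ncard_le_ncard hsub (Set.toFinite _)
      omega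
    obtain ⟨z, hz, hzS⟩ := Set.not_subset.mp hnsub
    have hzw : z ≠ w := hw z hz
    have hzu : z ≠ u := fun hzx => G.loopless.irrefl u (hzx ▸ hz)
    have huw : u ≠ w := by
      rcases hFle hc with ⟨_, _, hww⟩ | ⟨h, _⟩
      · exact absurd rfl hww
      · exact h
    set σ : Equiv.Perm (Fin n) := Equiv.swap w z with hσ
    have hσw : σ w = z := Equiv.swap_apply_left _ _
    have hσz : σ z = w := Equiv.swap_apply_right _ _
    have hσu : σ u = u := Equiv.swap_apply_of_ne_of_ne huw (Ne.symm hzu)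
    have hznb : ∀ t, ¬ F.Adj z t := by
      intro t ht
      exact hzS ((SimpleGraph.mem_support F).mpr ⟨t, ht⟩)
    apply hGfree
    refine ⟨F.comap σ, ?_, ⟨?_, ?_⟩, ?_⟩
    · intro a b hab
      rw [SimpleGraph.comap_adj] at hab
      have hsa : σ a ≠ z := fun hx => hznb (σ b) (hx ▸ hab)
      have hsb : σ b ≠ z := fun hx => hznb (σ a) (hx ▸ hab.symm)
      rcases hFle hab with ⟨hg, haw, hbw⟩ | ⟨_, (⟨hau, hbw⟩ | ⟨haw, hbu⟩)⟩
      · have ha' : a ≠ w := fun hx => hsa (by rw [hx, hσw])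
        have ha'' : a ≠ z := fun hx => haw (by rw [hx, hσz])
        have hb' : b ≠ w := fun hx => hsb (by rw [hx, hσw])
        have hb'' : b ≠ z := fun hx => hbw (by rw [hx, hσz])
        rwa [Equiv.swap_apply_of_ne_of_ne ha' ha'',
          Equiv.swap_apply_of_ne_of_ne hb' hb''] at hg
      · have ha : a = u := by
          have h2 := congrArg σ hau
          rwa [Equiv.swap_apply_self, hσu] at h2
        have hb : b = z := by
          have h2 := congrArg σ hbw
          rwa [Equiv.swap_apply_self, hσw] at h2
        rw [ha, hb]; exact hz
      · have ha : a = z := by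
          have h2 := congrArg σ haw
          rwa [Equiv.swap_apply_self, hσw] at h2
        have hb : b = u := by
          have h2 := congrArg σ hbu
          rwa [Equiv.swap_apply_self, hσu] at h2
        rw [ha, hb]; exact hz.symm
    · -- acyclic
      intro v c hcyc
      exact hFac ((c.map (SimpleGraph.Hom.comap σ F)))
        ((SimpleGraph.Walk.map_isCycle_iff_of_injective σ.injective).mpr hcyc)
    · -- degrees
      intro v
      have hset : {t | (F.comap σ).Adj v t} = σ ⁻¹' {t | F.Adj (σ v) t} := rfl
      have himg : ⇑σ ⁻¹' {t | F.Adj (σ v) t} = ⇑σ.symm '' {t | F.Adj (σ v) t} := by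
        rw [Equiv.image_eq_preimage_symm, Equiv.symm_symm]
      rw [hset, himg, Set.ncard_image_of_injective _ σ.symm.injective]
      exact hFdeg (σ v)
    · -- edge count
      have himg : (F.comap σ).edgeSet = Sym2.map σ '' F.edgeSet := by
        ext e
        induction e with
        | _ a b =>
          simp only [SimpleGraph.mem_edgeSet, SimpleGraph.comap_adj, Set.mem_image]
          constructor
          · intro hab
            refine ⟨s(σ a, σ b), (SimpleGraph.mem_edgeSet F).mpr hab, ?_⟩
            rw [Sym2.map_pair_eq, Equiv.swap_apply_self, Equiv.swap_apply_self]
          · rintro ⟨e', he', hmap⟩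
            induction e' with
            | _ c d =>
              rw [Sym2.map_pair_eq, Sym2.eq_iff] at hmap
              rw [SimpleGraph.mem_edgeSet F] at he'
              rcases hmap with ⟨hca, hdb⟩ | ⟨hcb, hda⟩
              · have : σ a = c := by rw [← hca, Equiv.swap_apply_self]
                have h2 : σ b = d := by rw [← hdb, Equiv.swap_apply_self]
                rw [this, h2]; exact he'
              · have : σ a = d := by rw [← hda, Equiv.swap_apply_self]
                have h2 : σ b = c := by rw [← hcb, Equiv.swap_apply_self]
                rw [this, h2]; exact he'.symm
      rw [himg, Set.ncard_image_of_injective _ (Sym2.map.injective σ.injective), hFcard]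
  · -- no new edge used
    apply hGfree
    refine ⟨F, ?_, ⟨hFac, hFdeg⟩, hFcard⟩
    intro a b hab
    rcases hFle hab with ⟨hg, _, _⟩ | ⟨_, (⟨rfl, rfl⟩ | ⟨rfl, rfl⟩)⟩
    · exact hg
    · exact absurd hab hc
    · exact absurd hab.symm hc

/-- Pointwise formula for `mulVec`. -/
lemma mulVec_apply' {n : ℕ} (M : Matrix (Fin n) (Fin n) ℝ) (v : Fin n → ℝ) (i : Fin n) :
    (M *ᵥ v) i = ∑ j, M i j * v j := rfl

/-- The star graph on `Fin n`, centered at `0`. -/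
def StarG (n : ℕ) [NeZero n] : SimpleGraph (Fin n) where
  Adj a b := a ≠ b ∧ (a = 0 ∨ b = 0)
  symm := ⟨by rintro a b ⟨hne, h | h⟩ <;> exact ⟨hne.symm, by tauto⟩⟩
  loopless := ⟨by rintro a ⟨hne, _⟩; exact hne rfl⟩

lemma StarG_cliqueFree {n k : ℕ} [NeZero n] (hk : 2 ≤ k) : (StarG n).CliqueFree (k + 1) := by
  have h3 : (StarG n).CliqueFree 3 := by
    intro t ht
    obtain ⟨a, b, c, hab, hac, hbc, rfl⟩ := Finset.card_eq_three.mp ht.2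
    have h1 : (StarG n).Adj a b := ht.1 (by simp) (by simp) hab
    have h2 : (StarG n).Adj a c := ht.1 (by simp) (by simp) hac
    have h3 : (StarG n).Adj b c := ht.1 (by simp) (by simp) hbc
    obtain ⟨-, h1'⟩ := h1
    obtain ⟨-, h2'⟩ := h2
    obtain ⟨-, h3'⟩ := h3
    rcases h1' with rfl | rfl <;> rcases h2' with h | rfl <;> rcases h3' with h' | h' <;>
      simp_all
  exact h3.mono (by omega)

lemma StarG_forestFree {n s : ℕ} [NeZero n] (hs : 3 ≤ s) :
    ¬ ContainsLinForest (StarG n) s := by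
  rintro ⟨F, hle, ⟨_, hdeg⟩, hcard⟩
  have hsub : F.edgeSet ⊆ (fun t => s((0 : Fin n), t)) '' {t | F.Adj 0 t} := by
    intro e he
    induction e with
    | _ a b =>
      rw [SimpleGraph.mem_edgeSet F] at he
      obtain ⟨hne, h0⟩ := hle he
      rcases h0 with rfl | rfl
      · exact ⟨b, he, rfl⟩
      · exact ⟨a, he.symm, Sym2.eq_swap⟩
  have hle2 : F.edgeSet.ncard ≤ 2 := by
    calc F.edgeSet.ncard ≤ ((fun t => s((0 : Fin n), t)) '' {t | F.Adj 0 t}).ncard :=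
          Set.ncard_le_ncard hsub (Set.toFinite _)
      _ ≤ {t | F.Adj 0 t}.ncard := Set.ncard_image_le (Set.toFinite _)
      _ ≤ 2 := hdeg 0
  omega

end Aux

lemma sum_ite_zero' {n : ℕ} [NeZero n] (c d : ℝ) :
    ∑ a : Fin n, (if a = 0 then c else d) = c + ((n : ℝ) - 1) * d := by
  have h1 : ∀ a : Fin n, (if a = 0 then c else d) = (if a = 0 then c - d else 0) + d := by
    intro a; split <;> ring
  simp_rw [h1]
  rw [Finset.sum_add_distrib, Finset.sum_ite_eq' Finset.univ (0 : Fin n) (fun _ => c - d),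
    Finset.sum_const, Finset.card_univ, Fintype.card_fin, nsmul_eq_mul]
  simp only [Finset.mem_univ, if_pos]
  ring

lemma starG_row {n : ℕ} [NeZero n] (m : ℝ) (a : Fin n) :
    (adjMat (StarG n) *ᵥ (fun t : Fin n => if t = 0 then m else 1)) a
      = if a = 0 then ((n : ℝ) - 1) else m := by
  rw [mulVec_apply']
  by_cases ha : a = 0
  · subst ha
    have h1 : ∀ b : Fin n, adjMat (StarG n) 0 b * (if b = 0 then m else 1)
        = if b = 0 then 0 else 1 := by
      intro b
      by_cases hb : b = 0
      · subst hb
        rw [adjMat_of_not_adj ((StarG n).loopless.irrefl 0), zero_mul, if_pos rfl]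
      · have : (StarG n).Adj 0 b := ⟨fun hx => hb hx.symm, Or.inl rfl⟩
        rw [adjMat_of_adj this, if_neg hb, one_mul, if_neg hb]
    rw [Finset.sum_congr rfl fun b _ => h1 b, sum_ite_zero' 0 1, if_pos rfl]
    ring
  · have h1 : ∀ b : Fin n, adjMat (StarG n) a b * (if b = 0 then m else 1)
        = if b = 0 then m else 0 := by
      intro b
      by_cases hb : b = 0
      · subst hb
        have : (StarG n).Adj a 0 := ⟨ha, Or.inr rfl⟩
        rw [adjMat_of_adj this, if_pos rfl, one_mul, if_pos rfl]
      · have : ¬ (StarG n).Adj a b := by rintro ⟨_, h | h⟩ <;> [exact ha h; exact hb h]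
        rw [adjMat_of_not_adj this, zero_mul, if_neg hb]
    rw [Finset.sum_congr rfl fun b _ => h1 b, sum_ite_zero' m 0, if_neg ha]
    ring

lemma specRad_star_ge {n : ℕ} [NeZero n] {m : ℝ} (hm : 0 < m)
    (hcard : m ^ 2 + 1 ≤ (n : ℝ)) : m ≤ specRad (StarG n) := by
  have hn0 : 0 < n := Nat.pos_of_ne_zero (NeZero.ne n)
  set z : Fin n → ℝ := fun t => if t = 0 then m else 1 with hz
  have hdot1 : z ⬝ᵥ (adjMat (StarG n) *ᵥ z) = 2 * ((n : ℝ) - 1) * m := by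
    show ∑ a, z a * _ = _
    have h1 : ∀ a : Fin n, z a * (adjMat (StarG n) *ᵥ z) a
        = if a = 0 then m * ((n : ℝ) - 1) else m := by
      intro a
      rw [starG_row m a]
      by_cases ha : a = 0
      · subst ha; simp [hz]
      · simp [hz, ha]
    rw [Finset.sum_congr rfl fun a _ => h1 a, sum_ite_zero']
    ring
  have hdot2 : z ⬝ᵥ z = m ^ 2 + ((n : ℝ) - 1) := by
    show ∑ a, z a * z a = _
    have h1 : ∀ a : Fin n, z a * z a = if a = 0 then m ^ 2 else 1 := by
      intro a
      by_cases ha : a = 0 <;> rw [hz] <;> simp only [if_pos, ha, if_neg, ite_false] <;> ring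
    rw [Finset.sum_congr rfl fun a _ => h1 a, sum_ite_zero']
    ring
  have hray := rayleigh_le_specRad hn0 (StarG n) z
  rw [hdot1, hdot2] at hray
  have hge1 : (1 : ℝ) ≤ (n : ℝ) := by
    exact_mod_cast hn0
  have hpos : 0 < m ^ 2 + ((n : ℝ) - 1) := by nlinarith [sq_nonneg m]
  nlinarith [hray, hm, hcard, hpos]

set_option maxHeartbeats 1600000 in
/-- Under the standing setup, any graph in `Ex_sp(n, {K_{k+1}, 𝓛_s})` is connected. -/
theorem extremal_connected (k s n : ℕ) (hk : 2 ≤ k) (hs : 3 ≤ s)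
    (h : ℕ) (hh : h = (s - 1) / 2) (α : ℝ) (hα : α = 1 / (36 * ((h : ℝ) + 1) ^ 3))
    (hn : 28 * ((h : ℝ) + 1) ^ 2 / α ^ 2 ≤ (n : ℝ))
    (G : SimpleGraph (Fin n)) (hG : IsExtremal n k s G) :
    G.Connected := by
  classical
  obtain ⟨hclq, hfree, hmax⟩ := hG
  -- ## Arithmetic preliminaries
  have hh1 : (1 : ℝ) ≤ (h : ℝ) + 1 := by
    have : (0 : ℝ) ≤ (h : ℝ) := Nat.cast_nonneg h
    linarith
  have hs2h : s ≤ 2 * h + 2 := by omega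
  have hscast : (s : ℝ) ≤ 2 * (h : ℝ) + 2 := by exact_mod_cast hs2h
  have hα2 : α ^ 2 = 1 / (1296 * ((h : ℝ) + 1) ^ 6) := by
    have h36 : (36 * ((h : ℝ) + 1) ^ 3) ^ 2 = 1296 * ((h : ℝ) + 1) ^ 6 := by ring
    rw [hα, div_pow, one_pow, h36]
  have hn8 : 28 * ((h : ℝ) + 1) ^ 2 * (1296 * ((h : ℝ) + 1) ^ 6) ≤ (n : ℝ) := by
    rw [hα2, div_eq_mul_inv, one_div, inv_inv] at hn
    exact hn
  set m : ℝ := 2 * (s : ℝ) + 1 with hm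
  have hs3 : (3 : ℝ) ≤ (s : ℝ) := by exact_mod_cast hs
  have hm7 : (7 : ℝ) ≤ m := by rw [hm]; linarith
  have hm0 : (0 : ℝ) < m := by linarith
  have hmn : m ^ 2 + 1 ≤ (n : ℝ) := by
    set X : ℝ := (h : ℝ) + 1 with hX
    have hn8' : 36288 * X ^ 8 ≤ (n : ℝ) := by
      calc 36288 * X ^ 8 = 28 * X ^ 2 * (1296 * X ^ 6) := by ring
        _ ≤ (n : ℝ) := hn8
    have hm5 : m ≤ 5 * X := by rw [hm]; linarith [hscast, hh1]
    have hm2 : m ^ 2 ≤ 25 * X ^ 2 := by nlinarith [hm5, hm0]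
    have hX21 : 1 ≤ X ^ 2 := by nlinarith [hh1]
    have hX28 : X ^ 2 ≤ X ^ 8 := pow_le_pow_right₀ hh1 (by norm_num)
    linarith [hm2, hX21, hX28, hn8']
  have hnne : n ≠ 0 := by
    intro h0
    rw [h0] at hmn
    push_cast at hmn
    nlinarith [hmn, sq_nonneg m]
  haveI : NeZero n := ⟨hnne⟩
  have hn0 : 0 < n := Nat.pos_of_ne_zero hnne
  -- ## Lower bound on the spectral radius via the star
  have hlam : m ≤ specRad G :=
    le_trans (specRad_star_ge hm0 hmn) (hmax (StarG n) (StarG_cliqueFree hk) (StarG_forestFree hs))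
  set lam : ℝ := specRad G with hlamdef
  have hlam0 : (0 : ℝ) < lam := lt_of_lt_of_le (by linarith) hlam
  -- ## Suppose not connected
  rw [SimpleGraph.connected_iff]
  refine ⟨?_, ⟨⟨0, hn0⟩⟩⟩
  by_contra hpre
  unfold SimpleGraph.Preconnected at hpre
  push_neg at hpre
  obtain ⟨a, b, hab⟩ := hpre
  -- ## Top eigenvector, restricted to a component
  obtain ⟨v, hv0, hveq⟩ := exists_eigvec_specRad hn0 G
  obtain ⟨u₀, hu₀⟩ := Function.ne_iff.mp hv0
  set x : Fin n → ℝ := fun t => if G.Reachable t u₀ then v t else 0 with hxdef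
  have hxt : ∀ t, x t = if G.Reachable t u₀ then v t else 0 := fun _ => rfl
  have hxeig : adjMat G *ᵥ x = lam • x := by
    funext t
    rw [mulVec_apply', Pi.smul_apply, smul_eq_mul]
    by_cases hr : G.Reachable t u₀
    · have hterm : ∀ c, adjMat G t c * x c = adjMat G t c * v c := by
        intro c
        by_cases hadj : G.Adj t c
        · have hrc : G.Reachable c u₀ := (hadj.symm.reachable).trans hr
          rw [hxt c, if_pos hrc]
        · rw [adjMat_of_not_adj hadj, zero_mul, zero_mul]
      calc ∑ c, adjMat G t c * x c = ∑ c, adjMat G t c * v c :=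
            Finset.sum_congr rfl fun c _ => hterm c
        _ = lam * v t := by
            have hAv := congrFun hveq t
            rwa [mulVec_apply', Pi.smul_apply, smul_eq_mul] at hAv
        _ = lam * x t := by rw [hxt t, if_pos hr]
    · have hterm : ∀ c, adjMat G t c * x c = 0 := by
        intro c
        by_cases hadj : G.Adj t c
        · have hrc : ¬ G.Reachable c u₀ := fun hrc => hr ((hadj.reachable).trans hrc)
          rw [hxt c, if_neg hrc, mul_zero]
        · rw [adjMat_of_not_adj hadj, zero_mul]
      rw [Finset.sum_congr rfl fun c _ => hterm c, Finset.sum_const_zero,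
        hxt t, if_neg hr, mul_zero]
  -- ## The vertex of maximal eigenvector entry
  obtain ⟨u, -, hu⟩ := Finset.exists_max_image Finset.univ (fun t => |x t|)
    ⟨u₀, Finset.mem_univ u₀⟩
  have hxu0 : x u₀ ≠ 0 := by
    rw [hxt u₀, if_pos (SimpleGraph.Reachable.refl u₀)]
    simpa using hu₀
  have hxu : x u ≠ 0 := by
    intro h0
    have h1 := hu u₀ (Finset.mem_univ u₀)
    rw [h0, abs_zero] at h1
    exact hxu0 (abs_nonpos_iff.mp h1)
  have hru : G.Reachable u u₀ := by
    by_contra hr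
    exact hxu (by rw [hxt u, if_neg hr])
  -- ## A vertex outside the component of u₀
  obtain ⟨w, hrw⟩ : ∃ w, ¬ G.Reachable w u₀ := by
    rcases em (G.Reachable a u₀) with hra | hra
    · exact ⟨b, fun hrb => hab (hra.trans hrb.symm)⟩
    · exact ⟨a, hra⟩
  have huw : u ≠ w := fun he => hrw (he ▸ hru)
  have hwu : ∀ t, G.Adj u t → t ≠ w := fun t ht he =>
    hrw (he ▸ ((ht.symm.reachable).trans hru))
  have hxw : x w = 0 := by rw [hxt w, if_neg hrw]
  -- ## Degree bound at u
  have heigu : ∑ c, adjMat G u c * x c = lam * x u := by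
    have := congrFun hxeig u
    rwa [mulVec_apply', Pi.smul_apply, smul_eq_mul] at this
  set Nu : Finset (Fin n) := Finset.univ.filter (fun t => G.Adj u t) with hNu
  have habs : lam * |x u| ≤ (Nu.card : ℝ) * |x u| := by
    calc lam * |x u| = |lam * x u| := by rw [abs_mul, abs_of_pos hlam0]
      _ = |∑ c, adjMat G u c * x c| := by rw [heigu]
      _ ≤ ∑ c, |adjMat G u c * x c| := Finset.abs_sum_le_sum_abs _ _
      _ = ∑ c ∈ Nu, |x c| := by
          rw [hNu, Finset.sum_filter]
          refine Finset.sum_congr rfl fun c _ => ?_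
          by_cases hadj : G.Adj u c
          · rw [if_pos hadj, adjMat_of_adj hadj, one_mul]
          · rw [if_neg hadj, adjMat_of_not_adj hadj, zero_mul, abs_zero]
      _ ≤ ∑ _c ∈ Nu, |x u| := Finset.sum_le_sum fun c _ => hu c (Finset.mem_univ c)
      _ = (Nu.card : ℝ) * |x u| := by rw [Finset.sum_const, nsmul_eq_mul]
  have hxupos : (0 : ℝ) < |x u| := abs_pos.mpr hxu
  have hlamcard : lam ≤ (Nu.card : ℝ) := le_of_mul_le_mul_right (by linarith) hxupos
  have hdegn : 2 * s + 1 ≤ {t | G.Adj u t}.ncard := by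
    rw [neighbors_ncard_eq]
    have h1 : ((2 * s + 1 : ℕ) : ℝ) ≤ ((Finset.univ.filter (fun t => G.Adj u t)).card : ℝ) := by
      push_cast
      rw [hNu] at hlamcard
      linarith
    exact_mod_cast h1
  -- ## The surgery graph and the contradiction
  set H : SimpleGraph (Fin n) := Hg G u w with hH
  have hHle : specRad H ≤ lam :=
    hmax H (Hg_cliqueFree hk hclq) (Hg_forestFree hfree hwu hdegn)
  set ε : ℝ := x u / lam with hε
  set d : Fin n → ℝ := Pi.single w 1 with hd
  set x' : Fin n → ℝ := x + ε • d with hx'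
  -- entries of adjMat H at w
  have hHadj_uw : H.Adj u w := by
    rw [hH, Hg_adj]
    exact Or.inr ⟨huw, Or.inl ⟨rfl, rfl⟩⟩
  have hHw : ∀ c, adjMat H w c = if c = u then 1 else 0 := by
    intro c
    by_cases hc : c = u
    · subst hc
      rw [adjMat_of_adj hHadj_uw.symm, if_pos rfl]
    · rw [if_neg hc, adjMat_of_not_adj]
      rw [hH, Hg_adj]
      rintro (⟨_, hww, _⟩ | ⟨_, (⟨hwu', _⟩ | ⟨_, hcu⟩)⟩)
      · exact hww rfl
      · exact huw hwu'.symm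
      · exact hc hcu
  have hHwc : ∀ c, adjMat H c w = if c = u then 1 else 0 := by
    intro c
    have h1 : adjMat H c w = adjMat H w c := by
      by_cases hadj : H.Adj c w
      · rw [adjMat_of_adj hadj, adjMat_of_adj hadj.symm]
      · rw [adjMat_of_not_adj hadj, adjMat_of_not_adj fun hx2 => hadj hx2.symm]
    rw [h1, hHw]
  -- T1
  have hT1 : x ⬝ᵥ (adjMat H *ᵥ x) = lam * (x ⬝ᵥ x) := by
    have key : ∀ c e, x c * (adjMat H c e * x e) = x c * (adjMat G c e * x e) := by
      intro c e
      by_cases hc : c = w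
      · rw [hc, hxw, zero_mul, zero_mul]
      · by_cases he : e = w
        · rw [he, hxw]; ring
        · congr 2
          by_cases hadj : G.Adj c e
          · rw [adjMat_of_adj hadj, adjMat_of_adj (by rw [hH, Hg_adj]; exact Or.inl ⟨hadj, hc, he⟩)]
          · rw [adjMat_of_not_adj hadj, adjMat_of_not_adj]
            rw [hH, Hg_adj]
            rintro (⟨hg, _, _⟩ | ⟨_, (⟨_, hew⟩ | ⟨hcw, _⟩)⟩)
            · exact hadj hg
            · exact he hew
            · exact hc hcw
    have h1 : x ⬝ᵥ (adjMat H *ᵥ x) = ∑ c, ∑ e, x c * (adjMat H c e * x e) := by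
      show ∑ c, x c * (adjMat H *ᵥ x) c = _
      refine Finset.sum_congr rfl fun c _ => ?_
      rw [mulVec_apply', Finset.mul_sum]
    have h2 : x ⬝ᵥ (adjMat G *ᵥ x) = ∑ c, ∑ e, x c * (adjMat G c e * x e) := by
      show ∑ c, x c * (adjMat G *ᵥ x) c = _
      refine Finset.sum_congr rfl fun c _ => ?_
      rw [mulVec_apply', Finset.mul_sum]
    rw [h1, Finset.sum_congr rfl fun c _ => Finset.sum_congr rfl fun e _ => key c e, ← h2,
      hxeig]
    show ∑ c, x c * (lam • x) c = lam * ∑ c, x c * x c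
    rw [Finset.mul_sum]
    refine Finset.sum_congr rfl fun c _ => ?_
    rw [Pi.smul_apply, smul_eq_mul]
    ring
  -- T2
  have hT2 : d ⬝ᵥ (adjMat H *ᵥ x) = x u := by
    rw [hd, single_dotProduct, one_mul, mulVec_apply']
    have key : ∀ c, adjMat H w c * x c = if c = u then x u else 0 := by
      intro c
      rw [hHw c]
      by_cases hc : c = u
      · rw [if_pos hc, if_pos hc, one_mul, hc]
      · rw [if_neg hc, if_neg hc, zero_mul]
    rw [Finset.sum_congr rfl fun c _ => key c,
      Finset.sum_ite_eq' Finset.univ u (fun _ => x u), if_pos (Finset.mem_univ u)]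
  -- T3
  have hT3 : x ⬝ᵥ (adjMat H *ᵥ d) = x u := by
    rw [hd, Matrix.mulVec_single]
    show ∑ c, x c * (adjMat H c w * 1) = x u
    have key : ∀ c, x c * (adjMat H c w * 1) = if c = u then x u else 0 := by
      intro c
      rw [hHwc c]
      by_cases hc : c = u
      · rw [if_pos hc, if_pos hc, hc]; ring
      · rw [if_neg hc, if_neg hc]; ring
    rw [Finset.sum_congr rfl fun c _ => key c,
      Finset.sum_ite_eq' Finset.univ u (fun _ => x u), if_pos (Finset.mem_univ u)]
  -- T4
  have hT4 : d ⬝ᵥ (adjMat H *ᵥ d) = 0 := by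
    rw [hd, Matrix.mulVec_single, single_dotProduct, one_mul]
    show adjMat H w w * 1 = 0
    rw [hHwc w,
      if_neg (fun hx2 => huw hx2.symm)]
    ring
  -- quadratic form at x'
  have hQ : x' ⬝ᵥ (adjMat H *ᵥ x') = lam * (x ⬝ᵥ x) + 2 * ε * x u := by
    rw [hx', Matrix.mulVec_add, Matrix.mulVec_smul, dotProduct_add,
      add_dotProduct, add_dotProduct, dotProduct_smul,
      smul_dotProduct, smul_dotProduct, dotProduct_smul,
      hT1, hT2, hT3, hT4]
    simp only [smul_eq_mul]
    ring
  have hxd : x ⬝ᵥ d = 0 := by rw [hd, dotProduct_single, hxw, zero_mul]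
  have hdx : d ⬝ᵥ x = 0 := by rw [hd, single_dotProduct, hxw, mul_zero]
  have hdd : d ⬝ᵥ d = 1 := by
    rw [hd, single_dotProduct, Pi.single_eq_same, mul_one]
  have hN : x' ⬝ᵥ x' = x ⬝ᵥ x + ε * ε := by
    rw [hx', dotProduct_add, add_dotProduct, add_dotProduct,
      dotProduct_smul, smul_dotProduct, smul_dotProduct,
      dotProduct_smul, hxd, hdx, hdd]
    simp only [smul_eq_mul]
    ring
  have hxx0 : (0 : ℝ) ≤ x ⬝ᵥ x := by
    show (0 : ℝ) ≤ ∑ i, x i * x i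
    exact Finset.sum_nonneg fun i _ => mul_self_nonneg (x i)
  have hray := rayleigh_le_specRad hn0 H x'
  rw [hQ, hN] at hray
  have hnn : (0 : ℝ) ≤ x ⬝ᵥ x + ε * ε := by linarith [hxx0, mul_self_nonneg ε]
  have hchain : lam * (x ⬝ᵥ x) + 2 * ε * x u ≤ lam * (x ⬝ᵥ x + ε * ε) :=
    le_trans hray (mul_le_mul_of_nonneg_right hHle hnn)
  have h2ε : 2 * ε * x u ≤ lam * (ε * ε) := by nlinarith [hchain]
  have hεlam : ε * lam = x u := div_mul_cancel₀ (x u) (ne_of_gt hlam0)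
  have hxu2 : (0 : ℝ) < x u * x u := mul_self_pos.mpr hxu
  have hfinal : 2 * (x u * x u) ≤ x u * x u := by
    have h3 := mul_le_mul_of_nonneg_right h2ε (le_of_lt hlam0)
    calc 2 * (x u * x u) = 2 * ε * x u * lam := by rw [← hεlam]; ring
      _ ≤ lam * (ε * ε) * lam := h3
      _ = (ε * lam) * (ε * lam) := by ring
      _ = x u * x u := by rw [hεlam]
  linarith
end

section
/- Under the standing setup, the set R' = {v ∈ V(G) : x_v > α x_z} satisfies |R'| ≤ 2√(hn). -/
open SimpleGraph Matrix

lemma mem_spectrum_of_eigen {m : ℕ} (M : Matrix (Fin m) (Fin m) ℝ) {μ : ℝ} {v : Fin m → ℝ}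
    (hv : v ≠ 0) (hMv : M *ᵥ v = μ • v) : μ ∈ spectrum ℝ M := by
  rw [← AlgEquiv.spectrum_eq (Matrix.toLinAlgEquiv' : Matrix (Fin m) (Fin m) ℝ ≃ₐ[ℝ] _) M]
  rw [← Module.End.hasEigenvalue_iff_mem_spectrum]
  apply Module.End.hasEigenvalue_of_hasEigenvector (x := v)
  refine ⟨?_, hv⟩
  rw [Module.End.mem_eigenspace_iff]
  rw [Matrix.toLinAlgEquiv'_apply, hMv]

def starG (m : ℕ) : SimpleGraph (Fin m) where
  Adj a b := a ≠ b ∧ ((a : ℕ) = 0 ∨ (b : ℕ) = 0)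
  symm := ⟨by intro a b hab; exact ⟨hab.1.symm, hab.2.symm⟩⟩
  loopless := ⟨fun a ha => ha.1 rfl⟩

lemma starG_adj {m : ℕ} {a b : Fin m} : (starG m).Adj a b ↔ a ≠ b ∧ ((a:ℕ) = 0 ∨ (b:ℕ) = 0) :=
  Iff.rfl

lemma starG_cliqueFree (m k : ℕ) (hk : 2 ≤ k) : (starG m).CliqueFree (k + 1) := by
  have h3 : (starG m).CliqueFree 3 := by
    intro t ht
    obtain ⟨a, b, c, hab, hac, hbc, rfl⟩ := Finset.card_eq_three.mp ht.card_eq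
    have h1 : (starG m).Adj a b := ht.isClique (by simp) (by simp) hab
    have h2 : (starG m).Adj a c := ht.isClique (by simp) (by simp) hac
    have h3 : (starG m).Adj b c := ht.isClique (by simp) (by simp) hbc
    rw [starG_adj] at h1 h2 h3
    rcases h1.2 with h | h
    · rcases h3.2 with h' | h'
      · exact hab (Fin.ext (h.trans h'.symm))
      · exact hac (Fin.ext (h.trans h'.symm))
    · rcases h2.2 with h' | h'
      · exact hab (Fin.ext (h'.trans h.symm))
      · exact hbc (Fin.ext (h.trans h'.symm))
  exact h3.mono (by omega)

lemma starG_linfree (m s : ℕ) (hs : 3 ≤ s) : ¬ ContainsLinForest (starG m) s := by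
  rintro ⟨H, hle, ⟨-, hdeg⟩, hcard⟩
  rcases Nat.eq_zero_or_pos m with rfl | hm
  · have : H.edgeSet = ∅ := Set.eq_empty_of_isEmpty _
    rw [this] at hcard; simp at hcard; omega
  set z0 : Fin m := ⟨0, hm⟩ with hz0
  have hsub : H.edgeSet ⊆ (fun w => s(z0, w)) '' {w | H.Adj z0 w} := by
    intro e he
    induction e with
    | h a b =>
      rw [SimpleGraph.mem_edgeSet] at he
      have hst := hle he
      rw [starG_adj] at hst
      rcases hst.2 with h0 | h0
      · have : a = z0 := Fin.ext h0
        subst this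
        exact ⟨b, he, rfl⟩
      · have : b = z0 := Fin.ext h0
        subst this
        exact ⟨a, he.symm, Sym2.eq_swap⟩
  have h1 : H.edgeSet.ncard ≤ 2 := by
    calc H.edgeSet.ncard ≤ ((fun w => s(z0, w)) '' {w | H.Adj z0 w}).ncard :=
          Set.ncard_le_ncard hsub (Set.toFinite _)
    _ ≤ {w | H.Adj z0 w}.ncard := Set.ncard_image_le (Set.toFinite _)
    _ ≤ 2 := hdeg z0
  omega

lemma starG_specRad (m : ℕ) (hm : 2 ≤ m) : Real.sqrt ((m : ℝ) - 1) ≤ specRad (starG m) := by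
  classical
  have hm0 : 0 < m := by omega
  set z0 : Fin m := ⟨0, hm0⟩ with hz0
  set c : ℝ := Real.sqrt ((m : ℝ) - 1) with hc
  have hm1 : (0:ℝ) ≤ (m:ℝ) - 1 := by
    have : (1:ℝ) ≤ (m:ℝ) := by exact_mod_cast Nat.one_le_of_lt hm
    linarith
  set v : Fin m → ℝ := fun a => if a = z0 then c else 1 with hv
  have hadj0 : ∀ b : Fin m, (starG m).Adj z0 b ↔ b ≠ z0 := by
    intro b
    rw [starG_adj]
    constructor
    · intro hb; exact hb.1.symm
    · intro hb; exact ⟨Ne.symm hb, Or.inl rfl⟩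
  have hvz : v z0 = c := by simp [hv]
  have heigen : adjMat (starG m) *ᵥ v = c • v := by
    funext a
    rw [Matrix.mulVec, dotProduct]
    by_cases ha : a = z0
    · subst ha
      have hterm : ∀ b : Fin m, adjMat (starG m) z0 b * v b = 1 - (if b = z0 then 1 else 0) := by
        intro b
        by_cases hb : b = z0
        · subst hb
          simp [adjMat, hv]
        · have : (starG m).Adj z0 b := (hadj0 b).mpr hb
          simp [adjMat, this, hv, hb]
      rw [Finset.sum_congr rfl (fun b _ => hterm b)]
      rw [Finset.sum_sub_distrib, Finset.sum_const, Finset.sum_ite_eq' Finset.univ z0 (fun _ => (1:ℝ))]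
      simp only [Finset.mem_univ, if_true, Finset.card_univ, Fintype.card_fin, nsmul_eq_mul, mul_one]
      rw [Pi.smul_apply, hvz, smul_eq_mul, ← Real.mul_self_sqrt hm1]
    · have hterm : ∀ b : Fin m, adjMat (starG m) a b * v b = if b = z0 then c else 0 := by
        intro b
        by_cases hb : b = z0
        · subst hb
          have hne : a ≠ z0 := ha
          have : (starG m).Adj a z0 := by
            rw [starG_adj]; exact ⟨hne, Or.inr rfl⟩
          simp [adjMat, this, hv]
        · have : ¬ (starG m).Adj a b := by
            rw [starG_adj]
            rintro ⟨-, h0 | h0⟩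
            · exact ha (Fin.ext h0)
            · exact hb (Fin.ext h0)
          simp [adjMat, this, hb]
      rw [Finset.sum_congr rfl (fun b _ => hterm b)]
      rw [Finset.sum_ite_eq' Finset.univ z0 (fun _ => c)]
      simp [hv, ha]
  have hvne : v ≠ 0 := by
    intro h0
    have h1 : v ⟨1, by omega⟩ = 0 := congrFun h0 _
    have h2 : (⟨1, by omega⟩ : Fin m) ≠ z0 := by
      intro h; exact absurd (congrArg Fin.val h) (by simp [hz0])
    rw [hv] at h1
    simp only [h2, if_neg, if_false] at h1
    norm_num at h1
  have hmem : c ∈ spectrum ℝ (adjMat (starG m)) := mem_spectrum_of_eigen _ hvne heigen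
  exact le_csSup (Matrix.finite_spectrum (adjMat (starG m))).bddAbove hmem


lemma not_reachable_of_isolated {V : Type*} {H : SimpleGraph V} {a b : V} (hab : a ≠ b)
    (hiso : ∀ u, ¬ H.Adj a u) : ¬ H.Reachable a b := by
  rintro ⟨p⟩
  cases p with
  | nil => exact hab rfl
  | cons ha _ => exact hiso _ ha

lemma containsLinForest_of_bigdeg {m s h : ℕ} (G : SimpleGraph (Fin m))
    (hsh : s ≤ 2 * h + 2) (S : Finset (Fin m)) (hS : S.card = h + 1)
    (hdeg : ∀ v ∈ S, 3 * h + 3 ≤ degOf G v) : ContainsLinForest G s := by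
  classical
  set N : Fin m → Finset (Fin m) := fun v => Finset.univ.filter (fun w => G.Adj v w) with hN
  have hNcard : ∀ v, degOf G v = (N v).card := by
    intro v
    rw [degOf, Set.ncard_eq_toFinset_card']
    congr 1
    ext w
    simp [hN]
  have hall : ∀ s' : Finset ({v // v ∈ S} × Fin 2),
      s'.card ≤ (s'.biUnion (fun p => N p.1.1 \ S)).card := by
    intro s'
    rcases s'.eq_empty_or_nonempty with rfl | ⟨p, hp⟩
    · simp
    · have h1 : s'.card ≤ 2 * h + 2 := by
        calc s'.card ≤ Fintype.card ({v // v ∈ S} × Fin 2) := Finset.card_le_univ s'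
          _ = (h + 1) * 2 := by simp [Fintype.card_coe, hS]
          _ = 2 * h + 2 := by ring
      have h2 : 2 * h + 2 ≤ (N p.1.1 \ S).card := by
        have hsd := Finset.le_card_sdiff S (N p.1.1)
        have hd := hdeg p.1.1 p.1.2
        rw [hNcard] at hd
        omega
      calc s'.card ≤ 2 * h + 2 := h1
        _ ≤ (N p.1.1 \ S).card := h2
        _ ≤ (s'.biUnion (fun p => N p.1.1 \ S)).card :=
            Finset.card_le_card (Finset.subset_biUnion_of_mem (fun p => N p.1.1 \ S) hp)
  obtain ⟨f, hfinj, hf⟩ := (Finset.all_card_le_biUnion_card_iff_exists_injective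
    (fun p : {v // v ∈ S} × Fin 2 => N p.1.1 \ S)).mp hall
  obtain ⟨g⟩ : Nonempty (Fin s ↪ ({v // v ∈ S} × Fin 2)) := by
    apply Function.Embedding.nonempty_of_card_le
    simp only [Fintype.card_fin, Fintype.card_prod, Fintype.card_coe, hS]
    omega
  set c : Fin s → Fin m := fun r => (g r).1.1 with hcdef
  set l : Fin s → Fin m := fun r => f (g r) with hldef
  have hcS : ∀ r, c r ∈ S := fun r => (g r).1.2
  have hlS : ∀ r, l r ∉ S := fun r => (Finset.mem_sdiff.mp (hf (g r))).2
  have hadj : ∀ r, G.Adj (c r) (l r) := by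
    intro r
    have := (Finset.mem_sdiff.mp (hf (g r))).1
    simpa [hN] using this
  have hlinj : Function.Injective l := fun a b hab => g.injective (hfinj hab)
  have hcl : ∀ r r', c r ≠ l r' := fun r r' e => hlS r' (e ▸ hcS r)
  set P : Set (Sym2 (Fin m)) := Set.range (fun r => s(c r, l r)) with hP
  set H := SimpleGraph.fromEdgeSet P with hH
  have hedge : ∀ a b : Fin m, H.Adj a b ↔
      (∃ r, (a = c r ∧ b = l r) ∨ (a = l r ∧ b = c r)) ∧ a ≠ b := by
    intro a b
    rw [hH, SimpleGraph.fromEdgeSet_adj]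
    constructor
    · rintro ⟨⟨r, hr⟩, hne⟩
      refine ⟨⟨r, ?_⟩, hne⟩
      rw [Sym2.eq_iff] at hr
      tauto
    · rintro ⟨⟨r, hr⟩, hne⟩
      refine ⟨⟨r, ?_⟩, hne⟩
      rw [Sym2.eq_iff]
      tauto
  have huniq : ∀ r w, H.Adj (l r) w → w = c r := by
    intro r w hw
    obtain ⟨⟨r', hr'⟩, hne⟩ := (hedge _ _).mp hw
    rcases hr' with ⟨h1, h2⟩ | ⟨h1, h2⟩
    · exact absurd h1.symm (hcl r' r)
    · have : r = r' := hlinj h1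
      rw [h2, ← this]
  -- degrees ≤ 2
  have hdeg2 : ∀ v, {w | H.Adj v w}.ncard ≤ 2 := by
    intro v
    by_cases hv : ∃ r, l r = v
    · obtain ⟨r, rfl⟩ := hv
      have hsub : {w | H.Adj (l r) w} ⊆ {c r} := fun w hw => huniq r w hw
      calc {w | H.Adj (l r) w}.ncard ≤ ({c r} : Set (Fin m)).ncard :=
            Set.ncard_le_ncard hsub (Set.toFinite _)
        _ = 1 := Set.ncard_singleton _
        _ ≤ 2 := by omega
    · by_cases hvS : v ∈ S
      · have hsub : {w | H.Adj v w} ⊆ {f (⟨v, hvS⟩, 0), f (⟨v, hvS⟩, 1)} := by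
          intro w hw
          obtain ⟨⟨r, hr⟩, hne⟩ := (hedge _ _).mp hw
          rcases hr with ⟨h1, h2⟩ | ⟨h1, h2⟩
          · have hfst : (g r).1 = ⟨v, hvS⟩ := Subtype.ext h1.symm
            have : w = f (g r) := h2
            rcases Fin.exists_fin_two.mp ⟨(g r).2, rfl⟩ with h | h
            · left
              rw [this, show (g r) = (⟨v, hvS⟩, 0) from Prod.ext hfst h]
            · right
              rw [this, show (g r) = (⟨v, hvS⟩, 1) from Prod.ext hfst h]
              exact rfl
          · exact absurd ⟨r, h1.symm⟩ hv
        calc {w | H.Adj v w}.ncard ≤ ({f (⟨v, hvS⟩, 0), f (⟨v, hvS⟩, 1)} : Set (Fin m)).ncard :=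
              Set.ncard_le_ncard hsub (Set.toFinite _)
          _ ≤ 2 := by
              calc ({f (⟨v, hvS⟩, 0), f (⟨v, hvS⟩, 1)} : Set (Fin m)).ncard
                  ≤ ({f (⟨v, hvS⟩, 1)} : Set (Fin m)).ncard + 1 := Set.ncard_insert_le _ _
                _ = 2 := by rw [Set.ncard_singleton]
      · have hsub : {w | H.Adj v w} = ∅ := by
          ext w
          simp only [Set.mem_setOf_eq, Set.mem_empty_iff_false, iff_false]
          intro hw
          obtain ⟨⟨r, hr⟩, hne⟩ := (hedge _ _).mp hw
          rcases hr with ⟨h1, h2⟩ | ⟨h1, h2⟩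
          · exact hvS (h1 ▸ hcS r)
          · exact hv ⟨r, h1.symm⟩
        rw [hsub]
        simp
  -- acyclic
  have hac : H.IsAcyclic := by
    rw [SimpleGraph.isAcyclic_iff_forall_adj_isBridge]
    intro v w hvw
    rw [SimpleGraph.isBridge_iff]
    obtain ⟨⟨r, hr⟩, hne⟩ := (hedge _ _).mp hvw
    have hlc : l r ≠ c r := fun e => hcl r r e.symm
    have key : ∀ e : Sym2 (Fin m), s(l r, c r) = e →
        ∀ u, ¬ (H \ SimpleGraph.fromEdgeSet {e}).Adj (l r) u := by
      rintro e he u hu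
      rw [SimpleGraph.sdiff_adj] at hu
      have hu1 : u = c r := huniq r u hu.1
      apply hu.2
      rw [SimpleGraph.fromEdgeSet_adj]
      subst hu1
      exact ⟨by rw [← he]; rfl, hu.1.ne⟩
    rcases hr with ⟨h1, h2⟩ | ⟨h1, h2⟩
    · subst h1; subst h2
      exact fun hreach => not_reachable_of_isolated hlc (key _ (Sym2.eq_swap)) hreach.symm
    · subst h1; subst h2
      exact fun hreach => not_reachable_of_isolated hlc (key _ rfl) hreach
  -- edge count
  have hinj2 : Function.Injective (fun r => s(c r, l r)) := by
    intro a b hab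
    simp only [Sym2.eq_iff] at hab
    rcases hab with ⟨h1, h2⟩ | ⟨h1, h2⟩
    · exact hlinj h2
    · exact absurd h1 (hcl a b)
  have hedgeset : H.edgeSet = P := by
    rw [hH, SimpleGraph.edgeSet_fromEdgeSet]
    ext e
    simp only [Set.mem_diff, Set.mem_setOf_eq]
    constructor
    · rintro ⟨he, -⟩; exact he
    · intro he
      refine ⟨he, ?_⟩
      obtain ⟨r, rfl⟩ := he
      simp only [Sym2.isDiag_iff_proj_eq]
      exact hcl r r
  have hcards : H.edgeSet.ncard = s := by
    rw [hedgeset, hP, ← Set.image_univ, Set.ncard_image_of_injective _ hinj2,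
      Set.ncard_univ, Nat.card_eq_fintype_card, Fintype.card_fin]
  have hleG : H ≤ G := by
    have hPsub : P ⊆ G.edgeSet := by
      rintro e ⟨r, rfl⟩
      exact (hadj r)
    calc H = SimpleGraph.fromEdgeSet P := hH
      _ ≤ SimpleGraph.fromEdgeSet G.edgeSet := SimpleGraph.fromEdgeSet_mono hPsub
      _ = G := SimpleGraph.fromEdgeSet_edgeSet G
  exact ⟨H, hleG, ⟨hac, hdeg2⟩, hcards⟩

/-- Under the standing setup, the set `R' = {v : x_v > α x_z}` has at most `2√(hn)`
elements. -/
theorem card_R'_le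
    (k s n : ℕ) (hk : 2 ≤ k) (hs : 3 ≤ s)
    (h : ℕ) (hh : h = (s - 1) / 2) (α : ℝ) (hα : α = 1 / (36 * ((h : ℝ) + 1) ^ 3))
    (hn : 28 * ((h : ℝ) + 1) ^ 2 / α ^ 2 ≤ (n : ℝ))
    (G : SimpleGraph (Fin n)) (hG : IsExtremal n k s G)
    (x : Fin n → ℝ) (hxpos : ∀ v, 0 < x v) (hxnorm : ∑ v, x v ^ 2 = 1)
    (heig : adjMat G *ᵥ x = specRad G • x)
    (z : Fin n) (hz : ∀ v, x v ≤ x z) :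
    ((Set.ncard {v : Fin n | α * x z < x v} : ℝ)) ≤ 2 * Real.sqrt ((h : ℝ) * (n : ℝ)) := by
  classical
  set ρ := specRad G with hρ
  set Hr : ℝ := (h : ℝ) + 1 with hHr
  have hHr1 : (1 : ℝ) ≤ Hr := by
    have : (0:ℝ) ≤ (h:ℝ) := Nat.cast_nonneg h
    rw [hHr]; linarith
  have hα0 : 0 < α := by rw [hα]; positivity
  have hαval : α = 1 / (36 * Hr ^ 3) := hα
  have hn8 : 36288 * Hr ^ 8 ≤ (n : ℝ) := by
    have hne : 28 * Hr ^ 2 / α ^ 2 = 36288 * Hr ^ 8 := by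
      rw [hαval]
      field_simp
      ring
    rw [← hne]
    exact hn
  have hHr8 : (1 : ℝ) ≤ Hr ^ 8 := one_le_pow₀ hHr1
  have hn2 : 2 ≤ n := by
    have : (2 : ℝ) ≤ (n : ℝ) := by nlinarith
    exact_mod_cast this
  -- spectral radius lower bound
  have hstar : Real.sqrt ((n : ℝ) - 1) ≤ ρ :=
    le_trans (starG_specRad n hn2) (hG.2.2 _ (starG_cliqueFree n k hk) (starG_linfree n s hs))
  have hsq : (108 * Hr ^ 4) ^ 2 ≤ (n : ℝ) - 1 := by nlinarith
  have hsqrt : 108 * Hr ^ 4 ≤ Real.sqrt ((n : ℝ) - 1) := by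
    have := Real.sqrt_le_sqrt hsq
    rwa [Real.sqrt_sq (by positivity)] at this
  have hkey : 3 * Hr ≤ α * Real.sqrt ((n : ℝ) - 1) := by
    have h1 : 3 * Hr = α * (108 * Hr ^ 4) := by
      rw [hαval]; field_simp; ring
    rw [h1]
    exact mul_le_mul_of_nonneg_left hsqrt hα0.le
  have hρ0 : 0 < ρ := lt_of_lt_of_le (Real.sqrt_pos.mpr (by
    have : (2:ℝ) ≤ (n:ℝ) := by exact_mod_cast hn2
    linarith)) hstar
  have hz0 : 0 < x z := hxpos z
  -- degree bound
  have hdegbig : ∀ v, α * x z < x v → 3 * h + 3 ≤ degOf G v := by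
    intro v hv
    have e1 : ρ * x v ≤ (degOf G v : ℝ) * x z := by
      have hev := congrFun heig v
      have hlhs : (adjMat G *ᵥ x) v =
          ∑ u ∈ Finset.univ.filter (fun u => G.Adj v u), x u := by
        rw [Matrix.mulVec, dotProduct, Finset.sum_filter]
        apply Finset.sum_congr rfl
        intro u _
        by_cases hadj : G.Adj v u <;> simp [adjMat, hadj]
      have hdegeq : degOf G v = (Finset.univ.filter (fun u => G.Adj v u)).card := by
        rw [degOf, Set.ncard_eq_toFinset_card']
        congr 1
        ext w
        simp
      have hsum : ∑ u ∈ Finset.univ.filter (fun u => G.Adj v u), x u ≤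
          (degOf G v : ℝ) * x z := by
        calc ∑ u ∈ Finset.univ.filter (fun u => G.Adj v u), x u
            ≤ (Finset.univ.filter (fun u => G.Adj v u)).card • x z :=
              Finset.sum_le_card_nsmul _ _ _ (fun u _ => hz u)
          _ = (degOf G v : ℝ) * x z := by rw [hdegeq, nsmul_eq_mul]
      rw [hlhs] at hev
      rw [hev] at hsum
      have : (ρ • x) v = ρ * x v := rfl
      rwa [this] at hsum
    have e2 : ρ * (α * x z) < ρ * x v := mul_lt_mul_of_pos_left hv hρ0
    have e3 : ρ * α * x z < (degOf G v : ℝ) * x z := by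
      calc ρ * α * x z = ρ * (α * x z) := by ring
        _ < ρ * x v := e2
        _ ≤ (degOf G v : ℝ) * x z := e1
    have e4 : ρ * α < (degOf G v : ℝ) := lt_of_mul_lt_mul_right e3 hz0.le
    have e5 : 3 * Hr < (degOf G v : ℝ) := by
      calc 3 * Hr ≤ α * Real.sqrt ((n:ℝ) - 1) := hkey
        _ ≤ α * ρ := mul_le_mul_of_nonneg_left hstar hα0.le
        _ = ρ * α := by ring
        _ < _ := e4
    have e6 : ((3 * h + 3 : ℕ) : ℝ) ≤ (degOf G v : ℝ) := by
      push_cast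
      rw [hHr] at e5
      linarith
    exact_mod_cast e6
  -- cardinality ≤ h
  have hcard : {v : Fin n | α * x z < x v}.ncard ≤ h := by
    by_contra hcon
    push_neg at hcon
    have hfin : {v : Fin n | α * x z < x v}.ncard =
        {v : Fin n | α * x z < x v}.toFinset.card := Set.ncard_eq_toFinset_card' _
    have hle : h + 1 ≤ {v : Fin n | α * x z < x v}.toFinset.card := by omega
    obtain ⟨S, hSsub, hScard⟩ := Finset.exists_subset_card_eq hle
    apply hG.2.1
    apply containsLinForest_of_bigdeg G (by omega) S hScard
    intro v hv
    have : v ∈ {v : Fin n | α * x z < x v} := by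
      have := hSsub hv
      simpa using this
    exact hdegbig v this
  -- conclusion
  have hle8 : Hr ≤ Hr ^ 8 := le_self_pow₀ hHr1 (by norm_num)
  have hhval : (h : ℝ) = Hr - 1 := by rw [hHr]; ring
  have hhn : (h : ℝ) ≤ (n : ℝ) := by linarith
  have hfinal : (h : ℝ) ≤ 2 * Real.sqrt ((h : ℝ) * (n : ℝ)) := by
    have h0 : (0:ℝ) ≤ (h:ℝ) := Nat.cast_nonneg h
    have h1 : (h : ℝ) = Real.sqrt (h:ℝ) * Real.sqrt (h:ℝ) := (Real.mul_self_sqrt h0).symm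
    calc (h : ℝ) = Real.sqrt (h:ℝ) * Real.sqrt (h:ℝ) := h1
      _ ≤ Real.sqrt (h:ℝ) * Real.sqrt (n:ℝ) :=
          mul_le_mul_of_nonneg_left (Real.sqrt_le_sqrt hhn) (Real.sqrt_nonneg _)
      _ = Real.sqrt ((h:ℝ) * (n:ℝ)) := (Real.sqrt_mul h0 _).symm
      _ ≤ 2 * Real.sqrt ((h:ℝ) * (n:ℝ)) := by
          have := Real.sqrt_nonneg ((h:ℝ) * (n:ℝ))
          linarith
  calc ((Set.ncard {v : Fin n | α * x z < x v} : ℝ)) ≤ (h : ℝ) := by exact_mod_cast hcard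
    _ ≤ 2 * Real.sqrt ((h : ℝ) * (n : ℝ)) := hfinal
end

section
/- Under the standing setup, let R' = {v ∈ V(G) : x_v > α x_z}. For any vertex v in R', if the degree of v in G satisfies d_G(v) ≤ αn/3, then the number of edges of the subgraph of G induced by (N(v) ∪ R') \ {v} is at most (5h-1)αn/3, where N(v) is the neighborhood of v in G. -/
open SimpleGraph Matrix

lemma adjMat_mulVec_apply {V : Type*} [Fintype V] (G : SimpleGraph V) [DecidableRel G.Adj]
    (x : V → ℝ) (u : V) :
    (adjMat G *ᵥ x) u = ∑ w ∈ Finset.univ.filter (fun w => G.Adj u w), x w := by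
  show ∑ w, adjMat G u w * x w = _
  rw [Finset.sum_filter]
  refine Finset.sum_congr rfl fun w _ => ?_
  simp only [adjMat]
  split_ifs <;> simp

lemma isAcyclic_of_starlike {V : Type*} [DecidableEq V] {H : SimpleGraph V} (B : Set V)
    (h1 : ∀ ⦃a b⦄, H.Adj a b → (a ∈ B ∧ b ∉ B) ∨ (b ∈ B ∧ a ∉ B))
    (h2 : ∀ u, u ∉ B → ∀ w w', H.Adj u w → H.Adj u w' → w = w') : H.IsAcyclic := by
  intro v c hc
  -- find a vertex of the cycle not in B
  have hex : ∃ u, u ∈ c.support ∧ u ∉ B := by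
    cases c with
    | nil => exact absurd rfl hc.ne_nil
    | cons hadj p =>
      rcases h1 hadj with ⟨_, hb⟩ | ⟨_, hb⟩
      · exact ⟨_, by simp [Walk.support_cons, Walk.start_mem_support], hb⟩
      · exact ⟨v, by simp, hb⟩
  obtain ⟨u, hu, huB⟩ := hex
  have hc2 : (c.rotate u hu).IsCycle := hc.rotate hu
  obtain ⟨b, hadj, q, hq⟩ := (Walk.not_nil_iff).mp hc2.not_nil
  rw [hq, Walk.cons_isCycle_iff] at hc2
  obtain ⟨hqp, hqe⟩ := hc2
  -- last edge of q
  have hbu : u ≠ b := (H.ne_of_adj hadj)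
  obtain ⟨b2, hadj2, r, hr⟩ := Walk.exists_eq_cons_of_ne hbu q.reverse
  have : s(u, b2) ∈ q.reverse.edges := by rw [hr]; simp
  rw [Walk.edges_reverse, List.mem_reverse] at this
  have hbb : b2 = b := h2 u huB b2 b hadj2 hadj
  rw [hbb] at this
  exact hqe this

lemma pick_leaves {V : Type*} [Fintype V] [DecidableEq V] (G : SimpleGraph V)
    [DecidableRel G.Adj] :
    ∀ (B F : Finset V), B ⊆ F → (∀ b ∈ B, F.card + 2 * B.card ≤ G.degree b) →
    ∃ ℓ : V → V × V, ∀ b ∈ B, G.Adj b (ℓ b).1 ∧ G.Adj b (ℓ b).2 ∧ (ℓ b).1 ≠ (ℓ b).2 ∧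
      (ℓ b).1 ∉ F ∧ (ℓ b).2 ∉ F ∧
      ∀ b' ∈ B, b' ≠ b → (ℓ b).1 ≠ (ℓ b').1 ∧ (ℓ b).1 ≠ (ℓ b').2 ∧
        (ℓ b).2 ≠ (ℓ b').1 ∧ (ℓ b).2 ≠ (ℓ b').2 := by
  intro B
  induction B using Finset.induction_on with
  | empty => exact fun F _ _ => ⟨fun w => (w, w), by simp⟩
  | @insert a B' ha IH =>
    intro F hsub hdeg
    have haF : a ∈ F := hsub (Finset.mem_insert_self a B')
    have hda : F.card + 2 * B'.card + 2 ≤ G.degree a := by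
      have := hdeg a (Finset.mem_insert_self a B')
      rw [Finset.card_insert_of_notMem ha] at this
      omega
    -- two fresh neighbors of a
    have hcard : 1 < (G.neighborFinset a \ F).card := by
      have h1 : (G.neighborFinset a).card ≤ (G.neighborFinset a \ F).card + F.card :=
        Finset.card_le_card_sdiff_add_card
      rw [SimpleGraph.card_neighborFinset_eq_degree] at h1
      omega
    obtain ⟨l1, hl1, l2, hl2, hl12⟩ := Finset.one_lt_card.mp hcard
    rw [Finset.mem_sdiff, SimpleGraph.mem_neighborFinset] at hl1 hl2
    obtain ⟨hl1a, hl1F⟩ := hl1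
    obtain ⟨hl2a, hl2F⟩ := hl2
    obtain ⟨ℓ', hℓ'⟩ := IH (insert l1 (insert l2 F))
      (fun b hb => Finset.mem_insert_of_mem (Finset.mem_insert_of_mem
        (hsub (Finset.mem_insert_of_mem hb))))
      (fun b hb => by
        have := hdeg b (Finset.mem_insert_of_mem hb)
        have h2 : (insert l1 (insert l2 F)).card ≤ F.card + 2 := by
          calc (insert l1 (insert l2 F)).card ≤ (insert l2 F).card + 1 :=
                Finset.card_insert_le _ _
            _ ≤ F.card + 1 + 1 := by have := Finset.card_insert_le l2 F; omega
        rw [Finset.card_insert_of_notMem ha] at this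
        omega)
    refine ⟨fun w => if w = a then (l1, l2) else ℓ' w, fun b hb => ?_⟩
    rcases Finset.mem_insert.mp hb with heq0 | hb'
    · subst heq0
      simp only [if_pos rfl]
      refine ⟨hl1a, hl2a, hl12, hl1F, hl2F, fun b' hb' hne => ?_⟩
      rcases Finset.mem_insert.mp hb' with heq | hb'2
      · exact absurd heq hne
      · have hb'ne : b' ≠ b := fun hh => ha (hh ▸ hb'2)
        simp only [if_neg hb'ne]
        obtain ⟨_, _, _, h4, h5, _⟩ := hℓ' b' hb'2
        simp only [Finset.mem_insert, not_or] at h4 h5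
        exact ⟨fun hh => h4.1 hh.symm, fun hh => h5.1 hh.symm,
          fun hh => h4.2.1 hh.symm, fun hh => h5.2.1 hh.symm⟩
    · have hbne : b ≠ a := fun hh => ha (hh ▸ hb')
      simp only [if_neg hbne]
      obtain ⟨h1, h2, h3, h4, h5, h6⟩ := hℓ' b hb'
      simp only [Finset.mem_insert, not_or] at h4 h5
      refine ⟨h1, h2, h3, h4.2.2, h5.2.2, fun b' hb'' hne => ?_⟩
      rcases Finset.mem_insert.mp hb'' with heq | hb'3
      · subst heq
        simp only [if_pos rfl]
        exact ⟨h4.1, h4.2.1, h5.1, h5.2.1⟩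
      · have hb'ne : b' ≠ a := fun hh => ha (hh ▸ hb'3)
        simp only [if_neg hb'ne]
        exact h6 b' hb'3 hne

lemma card_high_le {V : Type*} [Fintype V] [LinearOrder V] (G : SimpleGraph V)
    [DecidableRel G.Adj] (s h : ℕ) (hs : 3 ≤ s) (hsh : s ≤ 2 * h + 2)
    (hfree : ¬ ContainsLinForest G s) :
    (Finset.univ.filter (fun u => 3 * h + 3 ≤ G.degree u)).card ≤ h := by
  by_contra hcon
  push_neg at hcon
  set t := (s + 1) / 2 with ht
  have h2t : s ≤ 2 * t := by omega
  have ht1 : t ≤ h + 1 := by omega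
  have t0 : 0 < t := by omega
  obtain ⟨B, hBsub, hBcard⟩ := Finset.exists_subset_card_eq
    (le_trans ht1 hcon : t ≤ (Finset.univ.filter (fun u => 3 * h + 3 ≤ G.degree u)).card)
  have hBdeg : ∀ b ∈ B, 3 * h + 3 ≤ G.degree b := fun b hb =>
    (Finset.mem_filter.mp (hBsub hb)).2
  obtain ⟨ℓ, hpick⟩ := pick_leaves G B B le_rfl (fun b hb => by
    have := hBdeg b hb; rw [hBcard]; omega)
  have eqv := B.orderIsoOfFin hBcard
  set cfn : ℕ → V := fun j => if hj : j / 2 < t then (eqv ⟨j / 2, hj⟩ : V)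
    else (eqv ⟨0, t0⟩ : V) with hcfn
  have hcB : ∀ j, cfn j ∈ B := by
    intro j; simp only [hcfn]; split <;> exact Finset.coe_mem _
  have hcinj : ∀ {j j'}, j < s → j' < s → cfn j = cfn j' → j / 2 = j' / 2 := by
    intro j j' hj hj' hcc
    have hjt : j / 2 < t := by omega
    have hjt' : j' / 2 < t := by omega
    simp only [hcfn, dif_pos hjt, dif_pos hjt'] at hcc
    exact congrArg Fin.val (eqv.injective (Subtype.coe_injective hcc))
  set lfn : ℕ → V := fun j => if j % 2 = 0 then (ℓ (cfn j)).1 else (ℓ (cfn j)).2 with hlfn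
  have hlB : ∀ j, lfn j ∉ B := by
    intro j; simp only [hlfn]
    obtain ⟨_, _, _, h4, h5, _⟩ := hpick (cfn j) (hcB j)
    split <;> assumption
  have hadjcl : ∀ j, G.Adj (cfn j) (lfn j) := by
    intro j; simp only [hlfn]
    obtain ⟨h1, h2, _⟩ := hpick (cfn j) (hcB j)
    split <;> assumption
  have hlne : ∀ {j j'}, j < s → j' < s → j ≠ j' → lfn j ≠ lfn j' := by
    intro j j' hj hj' hne
    by_cases hcc : cfn j = cfn j'
    · have hdiv := hcinj hj hj' hcc
      have hmod : j % 2 ≠ j' % 2 := by omega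
      obtain ⟨_, _, h3, _⟩ := hpick (cfn j) (hcB j)
      simp only [hlfn, ← hcc]
      rcases Nat.even_or_odd j with hpar | hpar
      · have : j % 2 = 0 := Nat.even_iff.mp hpar
        have h' : ¬ (j' % 2 = 0) := by omega
        rw [if_pos this, if_neg h']
        exact h3
      · have : ¬ (j % 2 = 0) := by simpa [Nat.odd_iff] using hpar
        have h' : j' % 2 = 0 := by rw [Nat.odd_iff] at hpar; omega
        rw [if_neg this, if_pos h']
        exact fun hh => h3 hh.symm
    · obtain ⟨_, _, _, _, _, hcross⟩ := hpick (cfn j) (hcB j)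
      have hcr := hcross (cfn j') (hcB j') (fun hh => hcc hh.symm)
      simp only [hlfn]
      split <;> split
      · exact hcr.1
      · exact hcr.2.1
      · exact hcr.2.2.1
      · exact hcr.2.2.2
  set E : ℕ → Sym2 V := fun j => s(cfn j, lfn j) with hE
  set K : Finset (Sym2 V) := (Finset.range s).image E with hK
  have hcl : ∀ j, cfn j ≠ lfn j := fun j hh => hlB j (hh ▸ hcB j)
  have hKcard : K.card = s := by
    rw [hK, Finset.card_image_of_injOn, Finset.card_range]
    intro j hj j' hj' hEE
    rw [Finset.mem_coe, Finset.mem_range] at hj hj'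
    rcases Sym2.eq_iff.mp hEE with ⟨hc, hl⟩ | ⟨hc, hl⟩
    · by_contra hne
      exact hlne hj hj' hne hl
    · exact absurd (hc ▸ hcB j) (hlB j')
  set H : SimpleGraph V := SimpleGraph.fromEdgeSet (K : Set (Sym2 V)) with hHdef
  have hmem : ∀ {a b}, H.Adj a b →
      ∃ j, j < s ∧ ((a = cfn j ∧ b = lfn j) ∨ (a = lfn j ∧ b = cfn j)) := by
    intro a b hab
    rw [hHdef, SimpleGraph.fromEdgeSet_adj] at hab
    obtain ⟨hKmem, hne⟩ := hab
    rw [Finset.mem_coe, hK, Finset.mem_image] at hKmem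
    obtain ⟨j, hj, hEj⟩ := hKmem
    rw [Finset.mem_range] at hj
    rcases Sym2.eq_iff.mp hEj with ⟨hc, hl⟩ | ⟨hc, hl⟩
    · exact ⟨j, hj, Or.inl ⟨hc.symm, hl.symm⟩⟩
    · exact ⟨j, hj, Or.inr ⟨hl.symm, hc.symm⟩⟩
  have huniq : ∀ u, u ∉ B → ∀ w w', H.Adj u w → H.Adj u w' → w = w' := by
    intro u huB w w' h1 h2
    obtain ⟨j, hj, hc⟩ := hmem h1
    obtain ⟨j', hj', hc'⟩ := hmem h2
    rcases hc with ⟨hu, _⟩ | ⟨hu, hw⟩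
    · exact absurd (hu ▸ hcB j) huB
    rcases hc' with ⟨hu', _⟩ | ⟨hu', hw'⟩
    · exact absurd (hu' ▸ hcB j') huB
    have hjj : j = j' := by
      by_contra hne
      exact hlne hj hj' hne (hu ▸ hu' ▸ rfl : lfn j = lfn j')
    rw [hw, hw', hjj]
  have hHG : H ≤ G := by
    intro a b hab
    obtain ⟨j, _, hc⟩ := hmem hab
    rcases hc with ⟨ha, hb⟩ | ⟨ha, hb⟩
    · rw [ha, hb]; exact hadjcl j
    · rw [ha, hb]; exact (hadjcl j).symm
  have hforest : IsLinearForest H := by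
    constructor
    · apply isAcyclic_of_starlike (B : Set V)
      · intro a b hab
        obtain ⟨j, _, hc⟩ := hmem hab
        rcases hc with ⟨ha, hb⟩ | ⟨ha, hb⟩
        · exact Or.inl ⟨by simp [ha, hcB j], by simp [hb]; exact hlB j⟩
        · exact Or.inr ⟨by simp [hb, hcB j], by simp [ha]; exact hlB j⟩
      · intro u huB w w' h1 h2
        exact huniq u (by simpa using huB) w w' h1 h2
    · intro u
      by_cases huB : u ∈ B
      · have hsub : {w | H.Adj u w} ⊆ {(ℓ u).1, (ℓ u).2} := by
          intro w hw
          obtain ⟨j, hj, hc⟩ := hmem hw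
          rcases hc with ⟨ha, hb⟩ | ⟨ha, hb⟩
          · rw [hb, hlfn]
            simp only [← ha]
            split
            · exact Or.inl rfl
            · exact Or.inr rfl
          · exact absurd (ha ▸ hlB j) (fun hh => hh huB)
        calc {w | H.Adj u w}.ncard ≤ ({(ℓ u).1, (ℓ u).2} : Set V).ncard :=
              Set.ncard_le_ncard hsub (Set.toFinite _)
          _ ≤ 2 := le_trans (Set.ncard_insert_le _ _) (by simp)
      · by_cases hex : ∃ w0, H.Adj u w0
        · obtain ⟨w0, hw0⟩ := hex
          have hsub : {w | H.Adj u w} ⊆ {w0} := fun w hw => huniq u huB w w0 hw hw0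
          calc {w | H.Adj u w}.ncard ≤ ({w0} : Set V).ncard :=
                Set.ncard_le_ncard hsub (Set.toFinite _)
            _ ≤ 2 := by simp
        · have : {w | H.Adj u w} = ∅ := by
            ext w; simp only [Set.mem_setOf_eq, Set.mem_empty_iff_false, iff_false]
            exact fun hw => hex ⟨w, hw⟩
          simp [this]
  have hcount : H.edgeSet.ncard = s := by
    rw [hHdef, SimpleGraph.edgeSet_fromEdgeSet]
    have hdiag : ((K : Set (Sym2 V)) \ {e : Sym2 V | e.IsDiag}) = (K : Set (Sym2 V)) := by
      ext e
      simp only [Set.mem_diff, Set.mem_setOf_eq, Finset.mem_coe, and_iff_left_iff_imp]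
      intro he
      rw [hK, Finset.mem_image] at he
      obtain ⟨j, _, hEj⟩ := he
      rw [← hEj, hE]
      simp only [Sym2.isDiag_iff_proj_eq]
      exact hcl j
    rw [show (Sym2.diagSet : Set (Sym2 V)) = {e : Sym2 V | e.IsDiag} from rfl, hdiag, Set.ncard_coe_finset, hKcard]
  exact hfree ⟨H, hHG, hforest, hcount⟩

lemma sqrt_le_specRad {n k s : ℕ} (hk : 2 ≤ k) (hs : 3 ≤ s) (hn1 : 2 ≤ n)
    (G : SimpleGraph (Fin n)) (hG : IsExtremal n k s G) :
    Real.sqrt ((n : ℝ) - 1) ≤ specRad G := by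
  classical
  have hn0 : 0 < n := by omega
  set hub : Fin n := ⟨0, hn0⟩ with hhub
  set star : SimpleGraph (Fin n) :=
    { Adj := fun a b => (a = hub ∨ b = hub) ∧ a ≠ b,
      symm := ⟨by intro a b ⟨h1, h2⟩; exact ⟨h1.symm, h2.symm⟩⟩,
      loopless := ⟨fun a ⟨_, h2⟩ => h2 rfl⟩ } with hstar
  -- star is K_{k+1}-free
  have hcf : star.CliqueFree (k + 1) := by
    intro T hT
    have hcard : 2 ≤ (T.erase hub).card := by
      have h1 := Finset.card_erase_le (a := hub) (s := T)
      have h2 : T.card - 1 ≤ (T.erase hub).card := Finset.pred_card_le_card_erase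
      have := hT.2
      omega
    obtain ⟨a, ha, b, hb, hab⟩ := Finset.one_lt_card.mp hcard
    have haT := Finset.mem_of_mem_erase ha
    have hbT := Finset.mem_of_mem_erase hb
    have hadj := hT.1 haT hbT hab
    rcases hadj.1 with h | h
    · exact (Finset.mem_erase.mp ha).1 h
    · exact (Finset.mem_erase.mp hb).1 h
  -- star contains no linear forest with s edges
  have hlf : ¬ ContainsLinForest star s := by
    rintro ⟨H, hle, ⟨_, hdeg2⟩, hcount⟩
    have hsub : H.edgeSet ⊆ (fun w => s(hub, w)) '' {w | H.Adj hub w} := by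
      intro e he
      induction e with
      | h a b =>
        rw [SimpleGraph.mem_edgeSet] at he
        rcases (hle he).1 with rfl | rfl
        · exact ⟨b, he, rfl⟩
        · exact ⟨a, he.symm, Sym2.eq_swap⟩
    have h1 : H.edgeSet.ncard ≤ 2 := by
      calc H.edgeSet.ncard ≤ ((fun w => s(hub, w)) '' {w | H.Adj hub w}).ncard :=
            Set.ncard_le_ncard hsub (Set.toFinite _)
        _ ≤ {w | H.Adj hub w}.ncard := Set.ncard_image_le (Set.toFinite _)
        _ ≤ 2 := hdeg2 hub
    omega
  -- eigenvector for the star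
  set μ : ℝ := Real.sqrt ((n : ℝ) - 1) with hμ
  have hn1' : (1 : ℝ) ≤ (n : ℝ) := by exact_mod_cast Nat.one_le_iff_ne_zero.mpr (by omega)
  set y : Fin n → ℝ := fun u => if u = hub then μ else 1 with hy
  have hAy : adjMat star *ᵥ y = μ • y := by
    funext u
    rw [adjMat_mulVec_apply]
    by_cases hu : u = hub
    · subst hu
      have hfilt : Finset.univ.filter (fun w => star.Adj hub w) = Finset.univ.erase hub := by
        ext w
        rw [Finset.mem_filter, Finset.mem_erase]
        constructor
        · rintro ⟨_, _, hne⟩; exact ⟨fun hh => hne hh.symm, Finset.mem_univ w⟩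
        · rintro ⟨hne, _⟩; exact ⟨Finset.mem_univ w, Or.inl rfl, fun hh => hne hh.symm⟩
      rw [hfilt]
      have hsum : ∑ w ∈ Finset.univ.erase hub, y w = (n : ℝ) - 1 := by
        have : ∀ w ∈ Finset.univ.erase hub, y w = 1 := by
          intro w hw
          rw [hy]
          simp only [if_neg (Finset.mem_erase.mp hw).1]
        rw [Finset.sum_congr rfl this, Finset.sum_const, Finset.card_erase_of_mem
          (Finset.mem_univ hub), Finset.card_univ, Fintype.card_fin]
        rw [nsmul_eq_mul, mul_one]
        rw [Nat.cast_sub (by omega), Nat.cast_one]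
      rw [hsum]
      have hyh : y hub = μ := by rw [hy]; simp
      rw [Pi.smul_apply, hyh, smul_eq_mul, Real.mul_self_sqrt (by linarith)]
    · have hfilt : Finset.univ.filter (fun w => star.Adj u w) = {hub} := by
        ext w
        rw [Finset.mem_filter, Finset.mem_singleton]
        constructor
        · rintro ⟨_, h1 | h1, hne⟩
          · exact absurd h1 hu
          · exact h1
        · rintro rfl; exact ⟨Finset.mem_univ hub, Or.inr rfl, fun hh => hu hh⟩
      rw [hfilt, Finset.sum_singleton]
      have h1 : y hub = μ := by rw [hy]; simp
      have h2 : y u = 1 := by rw [hy]; simp [hu]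
      rw [h1, Pi.smul_apply, h2, smul_eq_mul, mul_one]
  -- μ is in the spectrum of the star
  have hmem : μ ∈ spectrum ℝ (adjMat star) := by
    rw [spectrum.mem_iff]
    intro hunit
    have hdet := (Matrix.isUnit_iff_isUnit_det _).mp hunit
    have hy0 : y ≠ 0 := by
      intro h0
      obtain ⟨u1, hu1⟩ : ∃ u1 : Fin n, u1 ≠ hub :=
        ⟨⟨1, by omega⟩, by rw [hhub]; intro hh; simpa using congrArg Fin.val hh⟩
      have h1 : y u1 = 0 := by rw [h0]; rfl
      rw [hy] at h1
      simp only [if_neg hu1] at h1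
      exact one_ne_zero h1
    have hMy : (algebraMap ℝ (Matrix (Fin n) (Fin n) ℝ) μ - adjMat star) *ᵥ y = 0 := by
      rw [Matrix.sub_mulVec, Algebra.algebraMap_eq_smul_one, Matrix.smul_mulVec,
        Matrix.one_mulVec, hAy, sub_self]
    have hdet0 := Matrix.exists_mulVec_eq_zero_iff.mp ⟨y, hy0, hMy⟩
    rw [hdet0] at hdet
    exact (isUnit_iff_ne_zero.mp hdet) rfl
  have hbdd : BddAbove (spectrum ℝ (adjMat star)) :=
    (Matrix.finite_spectrum (adjMat star)).bddAbove
  calc μ ≤ specRad star := le_csSup hbdd hmem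
    _ ≤ specRad G := hG.2.2 star hcf hlf

/-- Under the standing setup, if `v ∈ R'` has degree at most `αn/3`, then the subgraph of
`G` induced by `(N(v) ∪ R') \ {v}` has at most `(5h-1)αn/3` edges. -/
theorem edges_nbhd_union_R'_le
    (k s n : ℕ) (hk : 2 ≤ k) (hs : 3 ≤ s)
    (h : ℕ) (hh : h = (s - 1) / 2) (α : ℝ) (hα : α = 1 / (36 * ((h : ℝ) + 1) ^ 3))
    (hn : 28 * ((h : ℝ) + 1) ^ 2 / α ^ 2 ≤ (n : ℝ))
    (G : SimpleGraph (Fin n)) (hG : IsExtremal n k s G)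
    (x : Fin n → ℝ) (hxpos : ∀ v, 0 < x v) (hxnorm : ∑ v, x v ^ 2 = 1)
    (heig : adjMat G *ᵥ x = specRad G • x)
    (z : Fin n) (hz : ∀ v, x v ≤ x z)
    (v : Fin n) (hv : α * x z < x v) (hdeg : (degOf G v : ℝ) ≤ α * (n : ℝ) / 3) :
    (((G.induce (({w | G.Adj v w} ∪ {u : Fin n | α * x z < x u}) \ {v})).edgeSet.ncard : ℝ))
      ≤ (5 * (h : ℝ) - 1) * α * (n : ℝ) / 3 := by
  classical
  obtain ⟨hcf, hfree, hmax⟩ := hG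
  have hh1 : 1 ≤ h := by omega
  have hs2 : s ≤ 2 * h + 2 := by omega
  have hhr : (1 : ℝ) ≤ (h : ℝ) := by exact_mod_cast hh1
  have hα0 : 0 < α := by rw [hα]; positivity
  have hα1 : α ≤ 1 := by
    rw [hα, div_le_one (by positivity)]
    nlinarith [hhr]
  -- n is large
  have hn2 : (2 : ℝ) ≤ (n : ℝ) := by
    have h1 : (2 : ℝ) ≤ 28 * ((h : ℝ) + 1) ^ 2 / α ^ 2 := by
      rw [le_div_iff₀ (by positivity)]
      nlinarith [hhr, hα0, hα1]
    linarith
  have hn2' : 2 ≤ n := by exact_mod_cast hn2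
  -- lower bound on the spectral radius
  set ρ : ℝ := specRad G with hρdef
  have hρsqrt : Real.sqrt ((n : ℝ) - 1) ≤ ρ :=
    sqrt_le_specRad hk hs hn2' G ⟨hcf, hfree, hmax⟩
  have hsq : 5 * ((h : ℝ) + 1) / α ≤ Real.sqrt ((n : ℝ) - 1) := by
    rw [Real.le_sqrt (by positivity) (by linarith)]
    have hn' : 28 * ((h : ℝ) + 1) ^ 2 ≤ (n : ℝ) * α ^ 2 := by
      rw [div_le_iff₀ (by positivity)] at hn
      linarith
    rw [div_pow, div_le_iff₀ (by positivity)]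
    nlinarith [hhr, hα0, hα1]
  have hρ : 5 * ((h : ℝ) + 1) / α ≤ ρ := le_trans hsq hρsqrt
  have hρ0 : 0 < ρ := lt_of_lt_of_le (by positivity) hρ
  -- eigen equation pointwise
  have heq : ∀ u, ρ * x u = ∑ w ∈ Finset.univ.filter (fun w => G.Adj u w), x w := by
    intro u
    have h1 := congrFun heig u
    rw [adjMat_mulVec_apply] at h1
    simp only [Pi.smul_apply, smul_eq_mul] at h1
    exact h1.symm
  have hdeq : ∀ u, degOf G u = G.degree u := by
    intro u
    rw [degOf, SimpleGraph.degree, SimpleGraph.neighborFinset_eq_filter,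
      Set.ncard_eq_toFinset_card']
    congr 1
    ext w
    simp
  have hdg : ∀ u, ρ * x u ≤ (degOf G u : ℝ) * x z := by
    intro u
    rw [heq u]
    have h1 : ∑ w ∈ Finset.univ.filter (fun w => G.Adj u w), x w ≤
        (Finset.univ.filter (fun w => G.Adj u w)).card • x z :=
      Finset.sum_le_card_nsmul _ _ _ (fun w _ => hz w)
    rw [nsmul_eq_mul] at h1
    have h2 : degOf G u = (Finset.univ.filter (fun w => G.Adj u w)).card := by
      rw [hdeq u, SimpleGraph.degree, SimpleGraph.neighborFinset_eq_filter]
    rw [h2]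
    exact h1
  have hxz : 0 < x z := hxpos z
  -- vertices in R' have large degree
  have hRdeg : ∀ u, α * x z < x u → 3 * h + 3 ≤ degOf G u := by
    intro u hu
    have h1 : ρ * (α * x z) < ρ * x u := mul_lt_mul_of_pos_left hu hρ0
    have h2 := hdg u
    have h3 : ρ * α * x z < (degOf G u : ℝ) * x z := by nlinarith
    have h4 : ρ * α < (degOf G u : ℝ) := (mul_lt_mul_iff_of_pos_right hxz).mp h3
    have h5 : 5 * ((h : ℝ) + 1) ≤ ρ * α := by
      have := (mul_le_mul_iff_of_pos_right hα0).mpr hρ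
      rwa [div_mul_cancel₀ _ (ne_of_gt hα0)] at this
    have h6 : ((3 * h + 3 : ℕ) : ℝ) < (degOf G u : ℝ) := by push_cast; linarith
    exact_mod_cast le_of_lt h6
  -- the set of high-degree vertices
  set HI : Finset (Fin n) := Finset.univ.filter (fun u => 3 * h + 3 ≤ G.degree u) with hHI
  have hHIcard : HI.card ≤ h := card_high_le G s h hs hs2 hfree
  -- the vertex set W
  set W : Set (Fin n) := ({w | G.Adj v w} ∪ {u : Fin n | α * x z < x u}) \ {v} with hW
  set GW := G.induce W with hGW
  -- count edges via degrees
  have hsum : ∑ u : ↥W, GW.degree u = 2 * GW.edgeFinset.card :=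
    SimpleGraph.sum_degrees_eq_twice_card_edges GW
  have hdegW : ∀ u : ↥W, GW.degree u ≤
      if (u : Fin n) ∈ HI then Fintype.card ↥W - 1 else 3 * h + 2 := by
    intro u
    by_cases hu : (u : Fin n) ∈ HI
    · rw [if_pos hu]
      have := GW.degree_lt_card_verts u
      omega
    · rw [if_neg hu]
      have h1 : GW.degree u ≤ G.degree (u : Fin n) := by
        rw [SimpleGraph.degree, SimpleGraph.degree]
        exact Finset.card_le_card_of_injOn (fun w => (w : Fin n))
          (fun w hw => by
            rw [Finset.mem_coe, SimpleGraph.mem_neighborFinset] at hw ⊢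
            exact hw)
          (fun a _ b _ hab => Subtype.coe_injective hab)
      have h2 : ¬ (3 * h + 3 ≤ G.degree (u : Fin n)) := by
        intro hcon
        exact hu (Finset.mem_filter.mpr ⟨Finset.mem_univ _, hcon⟩)
      omega
  have hsum2 : ∑ u : ↥W, GW.degree u ≤ h * (Fintype.card ↥W - 1) +
      Fintype.card ↥W * (3 * h + 2) := by
    calc ∑ u : ↥W, GW.degree u
        ≤ ∑ u : ↥W, (if (u : Fin n) ∈ HI then Fintype.card ↥W - 1 else 3 * h + 2) :=
          Finset.sum_le_sum (fun u _ => hdegW u)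
      _ = (Finset.univ.filter (fun u : ↥W => (u : Fin n) ∈ HI)).card * (Fintype.card ↥W - 1)
          + (Finset.univ.filter (fun u : ↥W => ¬ (u : Fin n) ∈ HI)).card * (3 * h + 2) := by
          rw [Finset.sum_ite, Finset.sum_const, Finset.sum_const, smul_eq_mul, smul_eq_mul]
      _ ≤ h * (Fintype.card ↥W - 1) + Fintype.card ↥W * (3 * h + 2) := by
          apply Nat.add_le_add
          · apply Nat.mul_le_mul_right
            calc (Finset.univ.filter (fun u : ↥W => (u : Fin n) ∈ HI)).card ≤ HI.card :=
                  Finset.card_le_card_of_injOn (fun u => (u : Fin n))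
                    (fun w hw => (Finset.mem_filter.mp hw).2)
                    (fun a _ b _ hab => Subtype.coe_injective hab)
              _ ≤ h := hHIcard
          · apply Nat.mul_le_mul_right
            calc (Finset.univ.filter (fun u : ↥W => ¬ (u : Fin n) ∈ HI)).card
                ≤ (Finset.univ : Finset ↥W).card := Finset.card_filter_le _ _
              _ = Fintype.card ↥W := Finset.card_univ
  -- bound on |W|
  have hWsub : W.toFinset ⊆ G.neighborFinset v ∪ HI := by
    intro u hu
    rw [Set.mem_toFinset, hW] at hu
    obtain ⟨h1, _⟩ := hu
    rcases h1 with h1 | h1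
    · exact Finset.mem_union_left _ ((SimpleGraph.mem_neighborFinset G v u).mpr h1)
    · refine Finset.mem_union_right _ (Finset.mem_filter.mpr ⟨Finset.mem_univ _, ?_⟩)
      rw [← hdeq u]
      exact hRdeg u h1
  have hcW : Fintype.card ↥W ≤ degOf G v + h := by
    rw [← Set.toFinset_card]
    calc W.toFinset.card ≤ (G.neighborFinset v ∪ HI).card := Finset.card_le_card hWsub
      _ ≤ (G.neighborFinset v).card + HI.card := Finset.card_union_le _ _
      _ ≤ degOf G v + h := by
          rw [SimpleGraph.card_neighborFinset_eq_degree, ← hdeq v]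
          exact Nat.add_le_add le_rfl hHIcard
  -- natural number edge bound
  have hE : 2 * GW.edgeFinset.card ≤ (degOf G v + h) * (4 * h + 2) := by
    rw [← hsum]
    calc ∑ u : ↥W, GW.degree u ≤ h * (Fintype.card ↥W - 1) + Fintype.card ↥W * (3 * h + 2) :=
          hsum2
      _ ≤ h * (degOf G v + h) + (degOf G v + h) * (3 * h + 2) := by
          have h1 : Fintype.card ↥W - 1 ≤ degOf G v + h := by omega
          exact Nat.add_le_add (Nat.mul_le_mul_left _ h1) (Nat.mul_le_mul_right _ hcW)
      _ = (degOf G v + h) * (4 * h + 2) := by ring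
  -- pass to the reals
  have hEncard : GW.edgeSet.ncard = GW.edgeFinset.card := by
    rw [← SimpleGraph.coe_edgeFinset, Set.ncard_coe_finset]
  have hEreal : 2 * (GW.edgeSet.ncard : ℝ) ≤ ((degOf G v : ℝ) + h) * (4 * h + 2) := by
    rw [hEncard]
    exact_mod_cast hE
  -- final arithmetic
  have hαn : 1008 * ((h : ℝ) + 1) ^ 5 ≤ α * (n : ℝ) := by
    have hne : ((h : ℝ) + 1) ≠ 0 := by positivity
    have e1 : α * (28 * ((h : ℝ) + 1) ^ 2 / α ^ 2) = 1008 * ((h : ℝ) + 1) ^ 5 := by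
      rw [hα]
      field_simp
      ring
    calc 1008 * ((h : ℝ) + 1) ^ 5 = α * (28 * ((h : ℝ) + 1) ^ 2 / α ^ 2) := e1.symm
      _ ≤ α * (n : ℝ) := mul_le_mul_of_nonneg_left hn (le_of_lt hα0)
  have hpow : ((h : ℝ) + 1) ^ 2 ≤ ((h : ℝ) + 1) ^ 5 :=
    pow_le_pow_right₀ (by linarith) (by norm_num)
  have hαnpos : (0 : ℝ) < α * n := by
    have : (0 : ℝ) < 1008 * ((h : ℝ) + 1) ^ 5 := by positivity
    linarith
  have k1 : ((4 : ℝ) * h + 2) * h ≤ 672 * ((h : ℝ) + 1) ^ 2 := by nlinarith only [hhr]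
  have k2 : (672 : ℝ) * ((h : ℝ) + 1) ^ 2 ≤ 672 * ((h : ℝ) + 1) ^ 5 := by linarith only [hpow]
  have k3 : (672 : ℝ) * ((h : ℝ) + 1) ^ 5 ≤ (2 / 3) * (α * n) := by linarith only [hαn]
  have k4 : ((2 : ℝ) / 3) * (α * n) ≤ (6 * (h : ℝ) - 4) * (α * n) / 3 := by nlinarith only [hhr, hαnpos]
  have e0 : (0 : ℝ) ≤ 4 * (h : ℝ) + 2 := by linarith only [hhr]
  have k5 : 2 * (GW.edgeSet.ncard : ℝ) ≤ (α * n / 3 + h) * (4 * h + 2) := by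
    nlinarith only [hEreal, hdeg, e0]
  show (GW.edgeSet.ncard : ℝ) ≤ (5 * (h : ℝ) - 1) * α * (n : ℝ) / 3
  linarith only [k1, k2, k3, k4, k5]
end

section
/- Under the standing setup, every vertex v in the set R'' = {v ∈ V(G) : x_v > 4α x_z} has degree d_G(v) > αn/3 in G. -/
open SimpleGraph Matrix

/-! ### Auxiliary lemmas -/

open Finset

lemma adjMat_apply {V : Type*} (G : SimpleGraph V) [DecidableRel G.Adj] (a b : V) :
    adjMat G a b = if G.Adj a b then (1:ℝ) else 0 := by
  unfold adjMat
  split <;> rename_i hcase <;> simp [hcase]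

lemma adjMat_mulVec {n : ℕ} (G : SimpleGraph (Fin n)) [DecidableRel G.Adj] (x : Fin n → ℝ)
    (v : Fin n) : (adjMat G *ᵥ x) v = ∑ u ∈ univ.filter (fun u => G.Adj v u), x u := by
  unfold Matrix.mulVec dotProduct
  rw [Finset.sum_filter]
  refine Finset.sum_congr rfl fun u _ => ?_
  show adjMat G v u * x u = _
  rw [adjMat_apply]
  split <;> simp

lemma eigen_mem_spectrum {n : ℕ} {A : Matrix (Fin n) (Fin n) ℝ} {μ : ℝ} {y : Fin n → ℝ}
    (hy : y ≠ 0) (hAy : A *ᵥ y = μ • y) : μ ∈ spectrum ℝ A := by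
  rw [spectrum.mem_iff]
  intro hunit
  rw [Matrix.isUnit_iff_isUnit_det, isUnit_iff_ne_zero] at hunit
  apply hunit
  rw [← Matrix.exists_mulVec_eq_zero_iff]
  refine ⟨y, hy, ?_⟩
  rw [Algebra.algebraMap_eq_smul_one, Matrix.sub_mulVec, Matrix.smul_mulVec,
    Matrix.one_mulVec, hAy, sub_self]

lemma spectrum_adjMat_le {n : ℕ} (G : SimpleGraph (Fin n)) {μ : ℝ}
    (hμ : μ ∈ spectrum ℝ (adjMat G)) : μ ≤ n := by
  classical
  rw [spectrum.mem_iff, Matrix.isUnit_iff_isUnit_det, isUnit_iff_ne_zero, not_not,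
    ← Matrix.exists_mulVec_eq_zero_iff] at hμ
  obtain ⟨y, hy0, hy⟩ := hμ
  have hAy : adjMat G *ᵥ y = μ • y := by
    rw [Algebra.algebraMap_eq_smul_one, Matrix.sub_mulVec, Matrix.smul_mulVec,
      Matrix.one_mulVec, sub_eq_zero] at hy
    exact hy.symm
  obtain ⟨j, hj⟩ := Function.ne_iff.mp hy0
  have hne : (univ : Finset (Fin n)).Nonempty := ⟨j, mem_univ j⟩
  obtain ⟨i, -, hi⟩ := Finset.exists_max_image univ (fun j => |y j|) hne
  have hipos : 0 < |y i| := lt_of_lt_of_le (abs_pos.mpr hj) (hi j (mem_univ j))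
  have h1 : |μ| * |y i| ≤ n * |y i| := by
    have h2 : |μ * y i| = |(adjMat G *ᵥ y) i| := by rw [hAy]; simp
    rw [← abs_mul, h2]
    calc |(adjMat G *ᵥ y) i| ≤ ∑ u, |adjMat G i u * y u| := by
          unfold Matrix.mulVec dotProduct
          exact Finset.abs_sum_le_sum_abs _ _
      _ ≤ ∑ _u : Fin n, |y i| := by
          refine Finset.sum_le_sum fun u _ => ?_
          rw [abs_mul, adjMat_apply]
          split
          · simpa using hi u (mem_univ u)
          · simp [abs_nonneg]
      _ = n * |y i| := by simp [mul_comm]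
  have := le_of_mul_le_mul_right h1 hipos
  exact le_trans (le_abs_self μ) this

lemma le_specRad_of_eigen {n : ℕ} {G : SimpleGraph (Fin n)} {μ : ℝ} {y : Fin n → ℝ}
    (hy : y ≠ 0) (hAy : adjMat G *ᵥ y = μ • y) : μ ≤ specRad G :=
  le_csSup ⟨(n : ℝ), fun _ ha => spectrum_adjMat_le G ha⟩ (eigen_mem_spectrum hy hAy)

/-- complete bipartite graph `K_{h, n-h}` on `Fin n` -/
def bip (n h : ℕ) : SimpleGraph (Fin n) where
  Adj a b := (a.val < h ∧ ¬ b.val < h) ∨ (b.val < h ∧ ¬ a.val < h)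
  symm := ⟨by intro a b hab; tauto⟩
  loopless := ⟨by intro a ha; tauto⟩

lemma bip_adj {n h : ℕ} (a b : Fin n) :
    (bip n h).Adj a b ↔ ((a.val < h ∧ ¬ b.val < h) ∨ (b.val < h ∧ ¬ a.val < h)) := Iff.rfl

lemma bip_cliqueFree (n h k : ℕ) (hk : 2 ≤ k) : (bip n h).CliqueFree (k+1) := by
  have h3 : (bip n h).CliqueFree 3 := by
    intro t ht
    obtain ⟨a, b, c, hab, hac, hbc, rfl⟩ := Finset.card_eq_three.mp ht.2
    have h1 := ht.1 (by simp) (by simp) hab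
    have h2 := ht.1 (by simp) (by simp) hac
    have h3 := ht.1 (by simp) (by simp) hbc
    rw [bip_adj] at h1 h2 h3
    tauto
  exact h3.mono (by omega)

lemma card_filter_lt (n h : ℕ) (hhn : h ≤ n) :
    (univ.filter fun u : Fin n => u.val < h).card = h := by
  rcases Nat.eq_or_lt_of_le hhn with rfl | hlt
  · simp
  · have : (univ.filter fun u : Fin n => u.val < h) = Finset.Iio ⟨h, hlt⟩ := by
      ext u; simp [Finset.mem_Iio, Fin.lt_def]
    rw [this, Fin.card_Iio]

lemma card_filter_not_lt (n h : ℕ) (hhn : h ≤ n) :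
    (univ.filter fun u : Fin n => ¬ u.val < h).card = n - h := by
  have := Finset.card_filter_add_card_filter_not (s := (univ : Finset (Fin n)))
    (p := fun u : Fin n => u.val < h)
  rw [card_filter_lt n h hhn, Finset.card_univ, Fintype.card_fin] at this
  omega

lemma bip_linForestFree {n h s : ℕ} (h2h : 2 * h + 1 ≤ s) : ¬ ContainsLinForest (bip n h) s := by
  classical
  rintro ⟨H, hle, ⟨-, hdeg⟩, hcard⟩
  letI : DecidableRel H.Adj := Classical.decRel _
  have hdeg' : ∀ a, H.degree a ≤ 2 := by
    intro a
    have h1 := hdeg a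
    have h2 : {w | H.Adj a w} = ↑(H.neighborFinset a) := by ext w; simp
    rwa [h2, Set.ncard_coe_finset] at h1
  set A : Finset (Fin n) := univ.filter (fun a : Fin n => a.val < h) with hA
  have hsub : H.edgeFinset ⊆ A.biUnion (fun a => H.incidenceFinset a) := by
    intro e he
    induction e using Sym2.ind with
    | _ a b =>
      have hadj : H.Adj a b := by rwa [mem_edgeFinset, mem_edgeSet] at he
      rcases hle hadj with ⟨ha, -⟩ | ⟨hb, -⟩
      · exact Finset.mem_biUnion.mpr ⟨a, by simp [hA, ha],
          by rw [SimpleGraph.mem_incidenceFinset]; exact ⟨H.mem_edgeSet.mpr hadj, by simp⟩⟩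
      · exact Finset.mem_biUnion.mpr ⟨b, by simp [hA, hb],
          by rw [SimpleGraph.mem_incidenceFinset]; exact ⟨H.mem_edgeSet.mpr hadj, by simp⟩⟩
  have hcard' : H.edgeFinset.card = s := by
    rw [← Set.ncard_coe_finset, coe_edgeFinset]; exact hcard
  have hcount : H.edgeFinset.card ≤ 2 * h := by
    calc H.edgeFinset.card ≤ A.card * 2 := by
          refine le_trans (Finset.card_le_card hsub) ?_
          refine le_trans (Finset.card_biUnion_le) ?_
          refine le_trans (Finset.sum_le_sum (fun a _ => ?_)) (by rw [Finset.sum_const, smul_eq_mul])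
          rw [H.card_incidenceFinset_eq_degree]
          exact hdeg' a
      _ ≤ 2 * h := by
          have : A.card ≤ h := by
            rcases le_or_gt h n with hhn | hhn
            · rw [hA, card_filter_lt n h hhn]
            · exact le_trans (Finset.card_le_card (Finset.filter_subset _ _)) (by simp; omega)
          omega
  omega

lemma bip_eigen (n h : ℕ) (h1 : 1 ≤ h) (hhn : h < n) :
    ∃ y : Fin n → ℝ, y ≠ 0 ∧
      adjMat (bip n h) *ᵥ y = Real.sqrt ((h : ℝ) * ((n : ℝ) - h)) • y := by
  classical
  set N : ℝ := (n : ℝ) - h with hN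
  have hN0 : 0 < N := by
    rw [hN]; have : (h:ℝ) < n := by exact_mod_cast hhn
    linarith
  have hh0 : (0:ℝ) ≤ h := by positivity
  refine ⟨fun a => if a.val < h then Real.sqrt N else Real.sqrt h, ?_, ?_⟩
  · intro hy
    have h0n : 0 < n := lt_trans (by omega) hhn
    have := congrFun hy ⟨0, h0n⟩
    simp only [Pi.zero_apply] at this
    rw [if_pos (by show 0 < h; omega)] at this
    exact absurd this (ne_of_gt (Real.sqrt_pos.mpr hN0))
  · funext a
    rw [adjMat_mulVec]
    by_cases ha : a.val < h
    · have hfil : univ.filter (fun u => (bip n h).Adj a u)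
          = univ.filter (fun u : Fin n => ¬ u.val < h) := by
        ext u; simp only [mem_filter, mem_univ, true_and, bip_adj]; tauto
      rw [hfil]
      rw [Finset.sum_congr rfl (fun u hu => by
        rw [if_neg (by simpa using (Finset.mem_filter.mp hu).2)])]
      rw [Finset.sum_const, card_filter_not_lt n h (le_of_lt hhn), nsmul_eq_mul]
      have hcast : ((n - h : ℕ) : ℝ) = N := by
        rw [hN, Nat.cast_sub (le_of_lt hhn)]
      rw [hcast]
      simp only [Pi.smul_apply, smul_eq_mul, if_pos ha]
      rw [Real.sqrt_mul hh0, mul_assoc, Real.mul_self_sqrt (le_of_lt hN0), mul_comm]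
    · have hfil : univ.filter (fun u => (bip n h).Adj a u)
          = univ.filter (fun u : Fin n => u.val < h) := by
        ext u; simp only [mem_filter, mem_univ, true_and, bip_adj]; tauto
      rw [hfil]
      rw [Finset.sum_congr rfl (fun u hu => by
        rw [if_pos (by simpa using (Finset.mem_filter.mp hu).2)])]
      rw [Finset.sum_const, card_filter_lt n h (le_of_lt hhn), nsmul_eq_mul]
      simp only [Pi.smul_apply, smul_eq_mul, if_neg ha]
      rw [Real.sqrt_mul hh0]
      rw [show Real.sqrt h * Real.sqrt N * Real.sqrt h
            = (Real.sqrt h * Real.sqrt h) * Real.sqrt N by ring,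
        Real.mul_self_sqrt hh0]

lemma exists_two_neighbors {V : Type*} {H : SimpleGraph V} {a : V} {c : H.Walk a a}
    (hc : c.IsCycle) : ∃ b₁ b₂ : V, b₁ ≠ b₂ ∧ H.Adj a b₁ ∧ H.Adj a b₂ := by
  have h3 := hc.three_le_length
  obtain ⟨b, hab, q, rfl⟩ := SimpleGraph.Walk.not_nil_iff.mp hc.not_nil
  rw [SimpleGraph.Walk.cons_isCycle_iff] at hc
  have hq2 : 2 ≤ q.length := by
    simp only [SimpleGraph.Walk.length_cons] at h3; omega
  have hqrev : ¬ q.reverse.Nil := by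
    rw [SimpleGraph.Walk.not_nil_iff_lt_length, SimpleGraph.Walk.length_reverse]; omega
  obtain ⟨b₂, hab₂, q₂, hq₂⟩ := SimpleGraph.Walk.not_nil_iff.mp hqrev
  refine ⟨b, b₂, ?_, hab, hab₂⟩
  rintro rfl
  apply hc.2
  have : s(a, b) ∈ q.reverse.edges := by rw [hq₂]; simp
  rwa [SimpleGraph.Walk.edges_reverse, List.mem_reverse] at this

lemma acyclic_anti {V : Type*} {F' F : SimpleGraph V} (hle : F' ≤ F) (hF : F.IsAcyclic) :
    F'.IsAcyclic := by
  intro v c hc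
  exact hF (c.mapLe hle) (hc.mapLe hle)

lemma sup_edge_adj {V : Type*} (F : SimpleGraph V) {u w : V} (hne : u ≠ w) (a b : V) :
    (F ⊔ SimpleGraph.fromEdgeSet {s(u, w)}).Adj a b ↔
      F.Adj a b ∨ (a = u ∧ b = w) ∨ (a = w ∧ b = u) := by
  rw [SimpleGraph.sup_adj, SimpleGraph.fromEdgeSet_adj]
  constructor
  · rintro (hF1 | ⟨he, -⟩)
    · exact Or.inl hF1
    · rw [Set.mem_singleton_iff, Sym2.eq_iff] at he
      tauto
  · rintro (hF1 | ⟨rfl, rfl⟩ | ⟨rfl, rfl⟩)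
    · exact Or.inl hF1
    · exact Or.inr ⟨by simp, hne⟩
    · exact Or.inr ⟨by rw [Set.mem_singleton_iff, Sym2.eq_iff]; tauto, hne.symm⟩

lemma pendant_acyclic {V : Type*} {F : SimpleGraph V} (hF : F.IsAcyclic) {u w : V}
    (hne : u ≠ w) (hiso : ∀ y, ¬ F.Adj u y) :
    (F ⊔ SimpleGraph.fromEdgeSet {s(u, w)}).IsAcyclic := by
  classical
  intro a c hc
  by_cases hu : u ∈ c.support
  · have hc' := hc.rotate hu
    obtain ⟨b₁, b₂, hb12, h1, h2⟩ := exists_two_neighbors hc'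
    have e1 : b₁ = w := by
      rcases (sup_edge_adj F hne u b₁).mp h1 with h | ⟨-, rfl⟩ | ⟨h, -⟩
      · exact absurd h (hiso b₁)
      · rfl
      · exact absurd h hne
    have e2 : b₂ = w := by
      rcases (sup_edge_adj F hne u b₂).mp h2 with h | ⟨-, rfl⟩ | ⟨h, -⟩
      · exact absurd h (hiso b₂)
      · rfl
      · exact absurd h hne
    exact hb12 (e1.trans e2.symm)
  · have hedges : ∀ e ∈ c.edges, e ∈ F.edgeSet := by
      intro e he
      induction e using Sym2.ind with
      | _ p q =>
        have hpq := c.adj_of_mem_edges he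
        rcases (sup_edge_adj F hne p q).mp hpq with h | ⟨rfl, -⟩ | ⟨-, rfl⟩
        · exact F.mem_edgeSet.mpr h
        · exact absurd (SimpleGraph.Walk.fst_mem_support_of_mem_edges c he) hu
        · exact absurd (SimpleGraph.Walk.snd_mem_support_of_mem_edges c he) hu
    exact hF (c.transfer F hedges) (hc.transfer hedges)

set_option maxHeartbeats 1600000 in
/-- Under the standing setup, every vertex of `R'' = {v : x_v > 4α x_z}` has degree
greater than `αn/3`. -/
theorem degree_R''_gt
    (k s n : ℕ) (hk : 2 ≤ k) (hs : 3 ≤ s)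
    (h : ℕ) (hh : h = (s - 1) / 2) (α : ℝ) (hα : α = 1 / (36 * ((h : ℝ) + 1) ^ 3))
    (hn : 28 * ((h : ℝ) + 1) ^ 2 / α ^ 2 ≤ (n : ℝ))
    (G : SimpleGraph (Fin n)) (hG : IsExtremal n k s G)
    (x : Fin n → ℝ) (hxpos : ∀ v, 0 < x v) (hxnorm : ∑ v, x v ^ 2 = 1)
    (heig : adjMat G *ᵥ x = specRad G • x)
    (z : Fin n) (hz : ∀ v, x v ≤ x z)
    (v : Fin n) (hv : 4 * α * x z < x v) :
    α * (n : ℝ) / 3 < (degOf G v : ℝ) := by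
  classical
  obtain ⟨hKfree, hLfree, hmax⟩ := hG
  obtain ⟨ρ, hρdef⟩ : ∃ r : ℝ, specRad G = r := ⟨_, rfl⟩
  rw [hρdef] at heig
  simp only [hρdef] at hmax
  obtain ⟨H, hHdef⟩ : ∃ r : ℝ, (h : ℝ) + 1 = r := ⟨_, rfl⟩
  rw [hHdef] at hα hn
  -- arithmetic preliminaries
  have hh1 : 1 ≤ h := by omega
  have h2hs : 2 * h + 1 ≤ s := by omega
  have hs2h : s ≤ 2 * h + 2 := by omega
  have hH2 : (2:ℝ) ≤ H := by
    rw [← hHdef]; have : (1:ℝ) ≤ (h:ℝ) := by exact_mod_cast hh1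
    linarith
  have hαpos : 0 < α := by rw [hα]; positivity
  have hn' : 36288 * H ^ 8 ≤ (n : ℝ) := by
    have hcomp : 28 * H ^ 2 / α ^ 2 = 36288 * H ^ 8 := by
      rw [hα, ← hHdef]
      have hpos : ((h:ℝ) + 1) ^ 3 ≠ 0 := by positivity
      field_simp
      ring
    rw [← hcomp]
    exact hn
  have hH8 : H ≤ H ^ 8 := by
    have := pow_le_pow_right₀ (a := H) (by linarith) (by norm_num : 1 ≤ 8)
    rwa [pow_one] at this
  have hH8pos : (0:ℝ) ≤ H ^ 8 := by positivity
  have hhHR : (h : ℝ) = H - 1 := by rw [← hHdef]; ring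
  have hhnR : (h : ℝ) < (n : ℝ) := by linarith
  have hhn : h < n := by exact_mod_cast hhnR
  -- spectral radius lower bound by comparison with K_{h, n-h}
  obtain ⟨y, hy0, hy⟩ := bip_eigen n h hh1 hhn
  have hρ1 : Real.sqrt ((h:ℝ) * ((n:ℝ) - h)) ≤ ρ :=
    le_trans (le_specRad_of_eigen hy0 hy)
      (hmax _ (bip_cliqueFree n h k hk) (bip_linForestFree h2hs))
  have hρ0 : 0 ≤ ρ := le_trans (Real.sqrt_nonneg _) hρ1
  have hprod0 : (0:ℝ) ≤ (h:ℝ) * ((n:ℝ) - h) := by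
    have : (0:ℝ) ≤ (h:ℝ) := by positivity
    nlinarith [hhnR]
  have hρ2 : (h:ℝ) * ((n:ℝ) - h) ≤ ρ ^ 2 := by
    have hsq := Real.sq_sqrt hprod0
    nlinarith [hρ1, Real.sqrt_nonneg ((h:ℝ) * ((n:ℝ) - h))]
  -- eigen-equation coordinates
  letI : DecidableRel G.Adj := Classical.decRel _
  have hkey : ∀ w, ρ * x w = ∑ u ∈ univ.filter (fun u => G.Adj w u), x u := by
    intro w
    have hco := congrFun heig w
    rw [adjMat_mulVec] at hco
    rw [Pi.smul_apply, smul_eq_mul] at hco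
    exact hco.symm
  -- maximum linear forest
  set B := Nat.card (Sym2 (Fin n)) with hB
  set P : ℕ → Prop := fun m => ∃ F : SimpleGraph (Fin n), F ≤ G ∧ IsLinearForest F ∧
    F.edgeSet.ncard = m with hP
  have hPbound : ∀ m, P m → m ≤ B := by
    rintro m ⟨F, -, -, hcard⟩
    rw [← hcard, hB, ← Set.ncard_univ]
    exact Set.ncard_le_ncard (Set.subset_univ _) Set.finite_univ
  have hP0 : P 0 := by
    refine ⟨⊥, bot_le, ⟨SimpleGraph.isAcyclic_bot, fun w => ?_⟩, ?_⟩
    · simp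
    · simp
  obtain ⟨m, hPm, hPmax⟩ : ∃ m, P m ∧ ∀ j, P j → j ≤ m :=
    ⟨Nat.findGreatest P B, Nat.findGreatest_spec (Nat.zero_le B) hP0,
      fun j hj => Nat.le_findGreatest (hPbound j hj) hj⟩
  have hPdown : ∀ j, j ≤ m → P j := by
    intro j hj
    obtain ⟨F, hFG, ⟨hFacyc, hFdeg⟩, hFcard⟩ := hPm
    have hjm : j ≤ F.edgeSet.ncard := by rw [hFcard]; exact hj
    obtain ⟨S, hSsub, hScard⟩ := Set.exists_subset_card_eq hjm
    refine ⟨SimpleGraph.fromEdgeSet S, ?_, ⟨?_, ?_⟩, ?_⟩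
    · intro a b hab
      rw [SimpleGraph.fromEdgeSet_adj] at hab
      exact hFG (F.mem_edgeSet.mp (hSsub hab.1))
    · refine acyclic_anti ?_ hFacyc
      intro a b hab
      rw [SimpleGraph.fromEdgeSet_adj] at hab
      exact F.mem_edgeSet.mp (hSsub hab.1)
    · intro w
      refine le_trans (Set.ncard_le_ncard ?_ (Set.toFinite _)) (hFdeg w)
      intro a ha
      simp only [Set.mem_setOf_eq, SimpleGraph.fromEdgeSet_adj] at ha ⊢
      exact F.mem_edgeSet.mp (hSsub ha.1)
    · rw [SimpleGraph.edgeSet_fromEdgeSet]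
      have : S \ Sym2.diagSet = S := by
        ext e
        simp only [Set.mem_diff, Sym2.mem_diagSet, and_iff_left_iff_imp]
        intro heS hdiag
        exact (F.not_isDiag_of_mem_edgeSet (hSsub heS)) hdiag
      rw [this]
      exact hScard
  have hms : m < s := by
    by_contra h'
    exact hLfree (hPdown s (by omega))
  obtain ⟨F, hFG, ⟨hFacyc, hFdeg⟩, hFcard⟩ := hPm
  letI : DecidableRel F.Adj := Classical.decRel _
  set I : Finset (Fin n) := univ.filter (fun u => ∃ w, F.Adj u w) with hI
  set I₂ : Finset (Fin n) := univ.filter (fun w => {y | F.Adj w y}.ncard = 2) with hI₂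
  have hdeg_eq : ∀ a, {y | F.Adj a y}.ncard = F.degree a := by
    intro a
    have hset : {y | F.Adj a y} = ↑(F.neighborFinset a) := by ext yy; simp
    rw [hset, Set.ncard_coe_finset]
    rfl
  have hedge_eq : F.edgeFinset.card = m := by
    rw [← Set.ncard_coe_finset, SimpleGraph.coe_edgeFinset]; exact hFcard
  have hhandshake : ∑ a, F.degree a = 2 * m := by
    rw [SimpleGraph.sum_degrees_eq_twice_card_edges, hedge_eq]
  have hIcard : I.card ≤ 2 * m := by
    calc I.card = ∑ _a ∈ I, 1 := by simp
      _ ≤ ∑ a ∈ I, F.degree a := by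
          refine Finset.sum_le_sum fun a ha => ?_
          rw [hI] at ha
          obtain ⟨w, hw⟩ := (Finset.mem_filter.mp ha).2
          have : w ∈ F.neighborFinset a := by
            rw [SimpleGraph.mem_neighborFinset]; exact hw
          have := Finset.card_pos.mpr ⟨w, this⟩
          exact this
      _ ≤ ∑ a, F.degree a := Finset.sum_le_sum_of_subset (Finset.subset_univ I)
      _ = 2 * m := hhandshake
  have hI₂card : I₂.card ≤ m := by
    have : 2 * I₂.card ≤ 2 * m := by
      calc 2 * I₂.card = ∑ _a ∈ I₂, 2 := by rw [Finset.sum_const, smul_eq_mul, mul_comm]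
        _ = ∑ a ∈ I₂, F.degree a := by
            refine Finset.sum_congr rfl fun a ha => ?_
            rw [hI₂] at ha
            rw [← hdeg_eq a, (Finset.mem_filter.mp ha).2]
        _ ≤ ∑ a, F.degree a := Finset.sum_le_sum_of_subset (Finset.subset_univ I₂)
        _ = 2 * m := hhandshake
    omega
  -- maximality: neighbours of vertices outside I have F-degree 2
  have hC2 : ∀ u, u ∉ I → ∀ w, G.Adj u w → w ∈ I₂ := by
    intro u hu w huw
    have hiso : ∀ yy, ¬ F.Adj u yy := by
      intro yy hyy
      exact hu (by rw [hI]; exact Finset.mem_filter.mpr ⟨Finset.mem_univ u, ⟨yy, hyy⟩⟩)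
    by_contra hw
    have hwdeg : {y | F.Adj w y}.ncard ≤ 1 := by
      have hle2 := hFdeg w
      have hne2 : {y | F.Adj w y}.ncard ≠ 2 := by
        intro hc
        exact hw (by rw [hI₂]; exact Finset.mem_filter.mpr ⟨Finset.mem_univ w, hc⟩)
      omega
    have hne : u ≠ w := G.ne_of_adj huw
    set F' := F ⊔ SimpleGraph.fromEdgeSet {s(u, w)} with hF'def
    have hle' : F' ≤ G := by
      rw [hF'def]
      refine sup_le hFG ?_
      intro a b hab
      rw [SimpleGraph.fromEdgeSet_adj, Set.mem_singleton_iff, Sym2.eq_iff] at hab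
      rcases hab.1 with ⟨rfl, rfl⟩ | ⟨rfl, rfl⟩
      · exact huw
      · exact huw.symm
    have hacyc' : F'.IsAcyclic := pendant_acyclic hFacyc hne hiso
    have hdeg' : ∀ a, {yy | F'.Adj a yy}.ncard ≤ 2 := by
      intro a
      by_cases hau : a = u
      · subst hau
        have : {yy | F'.Adj a yy} = {w} := by
          ext yy
          rw [Set.mem_setOf_eq, hF'def, sup_edge_adj F hne]
          simp only [Set.mem_singleton_iff]
          constructor
          · rintro (h' | ⟨-, rfl⟩ | ⟨h', -⟩)
            · exact absurd h' (hiso yy)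
            · rfl
            · exact absurd h' hne
          · rintro rfl; exact Or.inr (Or.inl ⟨by trivial, by trivial⟩)
        rw [this, Set.ncard_singleton]; omega
      · by_cases haw : a = w
        · subst haw
          have hsub : {yy | F'.Adj a yy} ⊆ insert u {yy | F.Adj a yy} := by
            intro yy hyy
            rw [Set.mem_setOf_eq, hF'def, sup_edge_adj F hne] at hyy
            rcases hyy with h' | ⟨h1, -⟩ | ⟨-, rfl⟩
            · exact Set.mem_insert_of_mem _ h'
            · exact absurd h1 (Ne.symm hne)
            · exact Set.mem_insert _ _
          refine le_trans (Set.ncard_le_ncard hsub (Set.toFinite _)) ?_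
          refine le_trans (Set.ncard_insert_le _ _) ?_
          omega
        · have : {yy | F'.Adj a yy} = {yy | F.Adj a yy} := by
            ext yy
            rw [Set.mem_setOf_eq, Set.mem_setOf_eq, hF'def, sup_edge_adj F hne]
            constructor
            · rintro (h' | ⟨rfl, -⟩ | ⟨rfl, -⟩)
              · exact h'
              · exact absurd rfl hau
              · exact absurd rfl haw
            · exact fun h' => Or.inl h'
          rw [this]; exact hFdeg a
    have hcard' : F'.edgeSet.ncard = m + 1 := by
      have hnm : s(u, w) ∉ F.edgeSet := fun hc => hiso w (F.mem_edgeSet.mp hc)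
      have hEq : F'.edgeSet = insert s(u, w) F.edgeSet := by
        rw [hF'def, SimpleGraph.edgeSet_sup, SimpleGraph.edgeSet_fromEdgeSet]
        have hd : ({s(u, w)} : Set (Sym2 (Fin n))) \ Sym2.diagSet
            = {s(u, w)} := by
          ext e
          simp only [Set.mem_diff, Set.mem_singleton_iff, Sym2.mem_diagSet,
            and_iff_left_iff_imp]
          rintro rfl hdiag
          exact hne (Sym2.mk_isDiag_iff.mp hdiag)
        rw [hd, Set.union_comm, ← Set.insert_eq]
      rw [hEq, Set.ncard_insert_of_notMem hnm (F.edgeSet.toFinite), hFcard]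
    have : m + 1 ≤ m := hPmax (m + 1) ⟨F', hle', ⟨hacyc', hdeg'⟩, hcard'⟩
    omega
  -- weight bounds
  have hxz : 0 < x z := hxpos z
  have hub2 : ∀ u, u ∉ I → ρ * x u ≤ (m : ℝ) * x z := by
    intro u hu
    rw [hkey u]
    calc ∑ w ∈ univ.filter (fun w => G.Adj u w), x w
        ≤ ∑ w ∈ I₂, x w := by
          refine Finset.sum_le_sum_of_subset_of_nonneg ?_ (fun w _ _ => le_of_lt (hxpos w))
          intro w hwmem
          exact hC2 u hu w (Finset.mem_filter.mp hwmem).2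
      _ ≤ ∑ _w ∈ I₂, x z := Finset.sum_le_sum fun w _ => hz w
      _ = I₂.card * x z := by rw [Finset.sum_const, nsmul_eq_mul]
      _ ≤ (m : ℝ) * x z := by
          refine mul_le_mul_of_nonneg_right ?_ (le_of_lt hxz)
          exact_mod_cast hI₂card
  -- the degree of v
  have hdeg_v : ((univ.filter (fun u => G.Adj v u)).card : ℕ) = degOf G v := by
    unfold degOf
    rw [← Set.ncard_coe_finset]
    congr 1
    ext u; simp
  -- main spectral estimate
  have hmain : ρ * (ρ * x v) ≤ 2 * (m:ℝ) * ρ * x z + (degOf G v : ℝ) * ((m:ℝ) * x z) := by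
    rw [hkey v, Finset.mul_sum]
    calc ∑ u ∈ univ.filter (fun u => G.Adj v u), ρ * x u
        ≤ ∑ u ∈ univ.filter (fun u => G.Adj v u),
            (if u ∈ I then ρ * x z else (m:ℝ) * x z) := by
          refine Finset.sum_le_sum fun u _ => ?_
          split
          · exact mul_le_mul_of_nonneg_left (hz u) hρ0
          · rename_i hnotI
            exact hub2 u hnotI
      _ = ((univ.filter (fun u => G.Adj v u)).filter (fun u => u ∈ I)).card * (ρ * x z)
          + ((univ.filter (fun u => G.Adj v u)).filter (fun u => ¬ u ∈ I)).card
            * ((m:ℝ) * x z) := by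
          rw [Finset.sum_ite, Finset.sum_const, Finset.sum_const, nsmul_eq_mul, nsmul_eq_mul]
      _ ≤ (2 * (m:ℝ)) * (ρ * x z) + (degOf G v : ℝ) * ((m:ℝ) * x z) := by
          refine add_le_add ?_ ?_
          · refine mul_le_mul_of_nonneg_right ?_ (by positivity)
            have hcardle : ((univ.filter (fun u => G.Adj v u)).filter
                (fun u => u ∈ I)).card ≤ I.card := by
              refine Finset.card_le_card ?_
              intro u hu
              exact (Finset.mem_filter.mp hu).2
            have : ((univ.filter (fun u => G.Adj v u)).filter
                (fun u => u ∈ I)).card ≤ 2 * m := le_trans hcardle hIcard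
            exact_mod_cast this
          · refine mul_le_mul_of_nonneg_right ?_ (by positivity)
            have : ((univ.filter (fun u => G.Adj v u)).filter
                (fun u => ¬ u ∈ I)).card ≤ degOf G v := by
              rw [← hdeg_v]
              exact Finset.card_filter_le _ _
            exact_mod_cast this
      _ = 2 * (m:ℝ) * ρ * x z + (degOf G v : ℝ) * ((m:ℝ) * x z) := by ring
  -- final numeric contradiction
  by_contra hcon
  push_neg at hcon
  have hm_real : (m : ℝ) ≤ (s : ℝ) - 1 := by
    have : (m:ℝ) + 1 ≤ (s:ℝ) := by exact_mod_cast hms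
    linarith
  have hs_real : (s : ℝ) - 1 ≤ 2 * H - 1 := by
    have : (s : ℝ) ≤ 2 * (h:ℝ) + 2 := by exact_mod_cast hs2h
    rw [← hHdef]; linarith
  have hs1pos : (0:ℝ) ≤ (s:ℝ) - 1 := by
    have : (3:ℝ) ≤ (s:ℝ) := by exact_mod_cast hs
    linarith
  have hρ2pos : 0 < ρ ^ 2 := by
    have h1R : (1:ℝ) ≤ (h:ℝ) := by exact_mod_cast hh1
    have hmulpos : 0 < (h:ℝ) * ((n:ℝ) - h) := by
      have : (0:ℝ) < (h:ℝ) := by linarith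
      have h2 : (0:ℝ) < (n:ℝ) - h := by linarith [hhnR]
      exact mul_pos this h2
    exact lt_of_lt_of_le hmulpos hρ2
  -- the key strict inequality
  have hstrict : 4 * α * ρ ^ 2 * x z < 2 * ((s:ℝ) - 1) * ρ * x z
      + (α * (n:ℝ) / 3) * (((s:ℝ) - 1) * x z) := by
    have h1 : 4 * α * ρ ^ 2 * x z < ρ ^ 2 * x v := by
      have := mul_lt_mul_of_pos_left hv hρ2pos
      calc 4 * α * ρ ^ 2 * x z = ρ ^ 2 * (4 * α * x z) := by ring
        _ < ρ ^ 2 * x v := this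
    have h2 : ρ ^ 2 * x v ≤ 2 * (m:ℝ) * ρ * x z + (degOf G v : ℝ) * ((m:ℝ) * x z) := by
      calc ρ ^ 2 * x v = ρ * (ρ * x v) := by ring
        _ ≤ _ := hmain
    have h3 : 2 * (m:ℝ) * ρ * x z ≤ 2 * ((s:ℝ) - 1) * ρ * x z := by
      have hstep := mul_le_mul_of_nonneg_right
        (mul_le_mul_of_nonneg_left hm_real (by norm_num : (0:ℝ) ≤ 2))
        (mul_nonneg hρ0 (le_of_lt hxz))
      calc 2 * (m:ℝ) * ρ * x z = 2 * (m:ℝ) * (ρ * x z) := by ring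
        _ ≤ 2 * ((s:ℝ) - 1) * (ρ * x z) := hstep
        _ = 2 * ((s:ℝ) - 1) * ρ * x z := by ring
    have h4 : (degOf G v : ℝ) * ((m:ℝ) * x z) ≤ (α * (n:ℝ) / 3) * (((s:ℝ) - 1) * x z) := by
      refine mul_le_mul hcon ?_ ?_ ?_
      · exact mul_le_mul_of_nonneg_right hm_real (le_of_lt hxz)
      · exact mul_nonneg (Nat.cast_nonneg m) (le_of_lt hxz)
      · exact div_nonneg (mul_nonneg (le_of_lt hαpos) (Nat.cast_nonneg n)) (by norm_num)
    linarith
  have hkey2 : 4 * α * ρ ^ 2 < 2 * ((s:ℝ) - 1) * ρ + (α * (n:ℝ) / 3) * ((s:ℝ) - 1) := by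
    have := (mul_lt_mul_iff_left₀ hxz).mp (by linarith [hstrict] :
      (4 * α * ρ ^ 2) * x z < (2 * ((s:ℝ) - 1) * ρ + (α * (n:ℝ) / 3) * ((s:ℝ) - 1)) * x z)
    exact this
  -- now refute hkey2
  have hhH : (h:ℝ) = H - 1 := hhHR
  have hρlb : 72 * H ^ 4 ≤ ρ := by
    have hsq : 5184 * H ^ 8 ≤ ρ ^ 2 := by
      rw [hhH] at hρ2
      have e0 : (0:ℝ) ≤ (n:ℝ) - H + 1 := by linarith [hn', hH8, hH8pos]
      have e1 : (0:ℝ) ≤ (H - 2) * ((n:ℝ) - H + 1) :=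
        mul_nonneg (by linarith) e0
      nlinarith [hρ2, hn', hH8, hH8pos, e1]
    by_contra h'
    push_neg at h'
    have := mul_self_lt_mul_self hρ0 h'
    nlinarith [hsq]
  have hαH : α * (72 * H ^ 4) = 2 * H := by
    rw [hα, ← hHdef]
    have : ((h:ℝ) + 1) ^ 3 ≠ 0 := by positivity
    field_simp
    ring
  have hαρ : 2 * H ≤ α * ρ := by
    rw [← hαH]
    exact mul_le_mul_of_nonneg_left hρlb (le_of_lt hαpos)
  have hpart1 : 2 * ((s:ℝ) - 1) * ρ ≤ 2 * α * ρ ^ 2 := by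
    have hs2H : (s:ℝ) - 1 ≤ 2 * H := by linarith
    have hstep : ((s:ℝ) - 1) * ρ ≤ (α * ρ) * ρ :=
      mul_le_mul_of_nonneg_right (le_trans hs2H hαρ) hρ0
    nlinarith [hstep]
  have hpart2 : (α * (n:ℝ) / 3) * ((s:ℝ) - 1) ≤ 2 * α * ρ ^ 2 := by
    have hn6 : (n:ℝ) * ((s:ℝ) - 1) ≤ 6 * ρ ^ 2 := by
      rw [hhH] at hρ2
      have hnpos : (0:ℝ) ≤ (n:ℝ) := by positivity
      have hH28 : H ^ 2 ≤ H ^ 8 := pow_le_pow_right₀ (by linarith) (by norm_num)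
      have e1 : (0:ℝ) ≤ (H - 2) * (n:ℝ) := mul_nonneg (by linarith) hnpos
      nlinarith [hρ2, hn', hH28, hH8pos, e1, hs_real, hs1pos, sq_nonneg (H - 1)]
    calc (α * (n:ℝ) / 3) * ((s:ℝ) - 1) = (α / 3) * ((n:ℝ) * ((s:ℝ) - 1)) := by ring
      _ ≤ (α / 3) * (6 * ρ ^ 2) := by
          refine mul_le_mul_of_nonneg_left hn6 (by positivity)
      _ = 2 * α * ρ ^ 2 := by ring
  linarith [hkey2, hpart1, hpart2]
end
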